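/- arXiv:1705.10985 — 3 statements merged into one kernel-verified Lean document; each statement's English description precedes it below -/
import Mathlib

section
/- ODE lemma: For every K ∈ (0,∞) there is a constant C(K) ∈ (0,∞) with the following property. Let t* > 0 and c* ≥ 0, and let Ē, D, H̄, q : [0, t*] → [0,∞) be nonnegative functions with Ē and H̄ differentiable and D integrable, satisfying the differential inequalities dĒ/dt = −D and dH̄/dt ≤ K c*^{1/2}[(q D)^{1/2} + Ē^{3/4} D^{1/4}], and the algebraic inequalities Ē ≤ K[(H̄ D)^{1/2} + c*² D] and q ≤ K[(H̄ Ē)^{1/2} + c* Ē]. Then for all t ∈ [0, t*]: Ē(t) ≤ Ē(0); Ē(t) ≤ C(K)(H̄(0) + c*² Ē(0)) t^{−1}; q(t) ≤ C(K)(H̄(0) + c*² Ē(0))^{1/2} Ē(t)^{1/2}; and H̄(t) ≤ C(K)(H̄(0) + c*² Ē(0)). -/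
set_option maxHeartbeats 1000000


noncomputable section

/-- `G` is a nondegenerate even double-well potential with wells at `±1`. -/
structure DoubleWell (G : ℝ → ℝ) : Prop where
  smooth : ContDiff ℝ 2 G
  even : ∀ u : ℝ, G (-u) = G u
  pos : ∀ u : ℝ, u ≠ 1 → u ≠ -1 → 0 < G u
  zero_one : G 1 = 0
  zero_neg_one : G (-1) = 0
  deriv_nonpos : ∀ u ∈ Set.Icc (0:ℝ) 1, deriv G u ≤ 0
  dd_pos_one : 0 < iteratedDeriv 2 G 1
  dd_pos_neg_one : 0 < iteratedDeriv 2 G (-1)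

/-- `C_G = sqrt (G''(1))`, the sharp exponential rate. -/
def CG (G : ℝ → ℝ) : ℝ := Real.sqrt (iteratedDeriv 2 G 1)

/-- Ginzburg–Landau energy on the torus `(-Λ/2, Λ/2]`. -/
def energy (G : ℝ → ℝ) (Λ : ℝ) (u : ℝ → ℝ) : ℝ :=
  ∫ x in (-(Λ/2))..(Λ/2), ((1:ℝ)/2) * (deriv u x)^2 + G (u x)

/-- Ginzburg–Landau energy on an interval `(a, b)`. -/
def energyOn (G : ℝ → ℝ) (a b : ℝ) (u : ℝ → ℝ) : ℝ :=
  ∫ x in a..b, ((1:ℝ)/2) * (deriv u x)^2 + G (u x)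

def L2normSq (Λ : ℝ) (f : ℝ → ℝ) : ℝ := ∫ x in (-(Λ/2))..(Λ/2), (f x)^2

def H1normSq (Λ : ℝ) (f : ℝ → ℝ) : ℝ :=
  ∫ x in (-(Λ/2))..(Λ/2), (f x)^2 + (deriv f x)^2

def H1dotNormSq (Λ : ℝ) (f : ℝ → ℝ) : ℝ :=
  ∫ x in (-(Λ/2))..(Λ/2), (deriv f x)^2

/-- homogeneous `Ḣ^{-1}` norm of a (mean-zero) periodic function, by duality. -/
def HminusNorm (Λ : ℝ) (f : ℝ → ℝ) : ℝ :=
  sSup { r : ℝ | ∃ ξ : ℝ → ℝ, Function.Periodic ξ Λ ∧ ContDiff ℝ 1 ξ ∧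
    (∫ x in (-(Λ/2))..(Λ/2), (deriv ξ x)^2) ≤ 1 ∧
    r = ∫ x in (-(Λ/2))..(Λ/2), f x * ξ x }

def HminusNormSq (Λ : ℝ) (f : ℝ → ℝ) : ℝ := (HminusNorm Λ f)^2

/-- the weak norm `‖·‖_N` with lengthscale `ℓ`, by duality. -/
def weakNorm (Λ ℓ : ℝ) (w : ℝ → ℝ) : ℝ :=
  sSup { r : ℝ | ∃ ξ : ℝ → ℝ, Function.Periodic ξ Λ ∧ ContDiff ℝ 1 ξ ∧
    (∫ x in (-(Λ/2))..(Λ/2), ℓ⁻¹^2 * (ξ x)^2 + (deriv ξ x)^2) ≤ 1 ∧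
    r = ∫ x in (-(Λ/2))..(Λ/2), w x * ξ x }

/-- the dissipation `D = ∫ ((-u_xx + G'(u))_x)²`. -/
def dissipation (G : ℝ → ℝ) (Λ : ℝ) (u : ℝ → ℝ) : ℝ :=
  ∫ x in (-(Λ/2))..(Λ/2),
    (deriv (fun y => - iteratedDeriv 2 u y + deriv G (u y)) x)^2

/-- the periodic gap between a zero and the next one (with wrap-around `x_{N+1} = Λ + x₁`). -/
def cyclicGap (Λ : ℝ) {N : ℕ} (x : Fin N → ℝ) (i : Fin N) : ℝ :=
  if h : i.val + 1 < N then x ⟨i.val + 1, h⟩ - x i else Λ + x ⟨0, i.pos⟩ - x i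

def nextIdx {N : ℕ} (i : Fin N) : Fin N := ⟨(i.val + 1) % N, Nat.mod_lt _ i.pos⟩

def shiftOne (Λ : ℝ) {N : ℕ} (x : Fin N → ℝ) (i : Fin N) : ℝ :=
  if h : i.val + 1 < N then x ⟨i.val + 1, h⟩ else Λ + x ⟨0, i.pos⟩

/-- maximum distance between corresponding zeros, minimized over cyclic matchings. -/
def zeroDist (Λ : ℝ) {N : ℕ} (c c' : Fin N → ℝ) : ℝ :=
  min (⨆ i, |c i - c' i|)
    (min (⨆ i, |shiftOne Λ c i - c' i|) (⨆ i, |c i - shiftOne Λ c' i|))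

/-- minimal (periodic) distance between consecutive zeros. -/
def minGap (Λ : ℝ) {N : ℕ} (c : Fin N → ℝ) : ℝ := ⨅ i, cyclicGap Λ c i

/-- `v ∈ N_N(ℓ)` with zeros `x`: an alternating-sign energy-optimal profile with `N`
well-separated simple zeros. -/
structure IsSlowProfile (G : ℝ → ℝ) (Λ ℓ : ℝ) (N : ℕ) (v : ℝ → ℝ) (x : Fin N → ℝ) : Prop where
  periodic : Function.Periodic v Λ
  smooth : ContDiff ℝ 1 v
  mono : StrictMono x
  mem : ∀ i, x i ∈ Set.Ioc (-(Λ/2)) (Λ/2)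
  zero : ∀ i, v (x i) = 0
  simple : ∀ i, deriv v (x i) ≠ 0
  only_zeros : ∀ y ∈ Set.Ioc (-(Λ/2)) (Λ/2), v y = 0 → ∃ i, y = x i
  gap : ∀ i, ℓ ≤ cyclicGap Λ x i
  minimal : ∀ i, ∀ w : ℝ → ℝ, ContDiff ℝ 1 w →
    w (x i) = 0 → w (x i + cyclicGap Λ x i) = 0 →
    energyOn G (x i) (x i + cyclicGap Λ x i) v ≤ energyOn G (x i) (x i + cyclicGap Λ x i) w
  alternating : ∀ i,
    v (x i + cyclicGap Λ x i / 2) * v (x (nextIdx i) + cyclicGap Λ x (nextIdx i) / 2) < 0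

/-- membership in the slow manifold `N_N(ℓ)`. -/
def InSlowManifold (G : ℝ → ℝ) (Λ ℓ : ℝ) (N : ℕ) (v : ℝ → ℝ) : Prop :=
  ∃ x : Fin N → ℝ, IsSlowProfile G Λ ℓ N v x

/-- `u ∈ M_N(ℓ, C_H, C_E)`: mean-zero periodic `H¹` functions with bounded energy that are
order-one close in `Ḣ^{-1}` to the slow manifold. -/
structure InMeta (G : ℝ → ℝ) (Λ ℓ : ℝ) (N : ℕ) (CH CE : ℝ) (u : ℝ → ℝ) : Prop where
  periodic : Function.Periodic u Λ
  smooth : ContDiff ℝ 1 u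
  mean_zero : (∫ x in (-(Λ/2))..(Λ/2), u x) = 0
  energy_le : energy G Λ u ≤ CE
  close : ∃ vbar : ℝ → ℝ, InSlowManifold G Λ ℓ N vbar ∧
    HminusNormSq Λ (fun x => u x - vbar x) ≤ CH

/-- a smooth periodic solution of the Cahn–Hilliard equation `u_t = -(u_xx - G'(u))_xx`. -/
structure IsCHSolution (G : ℝ → ℝ) (Λ : ℝ) (u : ℝ → ℝ → ℝ) : Prop where
  smooth : ContDiff ℝ (⊤ : ℕ∞) (fun p : ℝ × ℝ => u p.1 p.2)
  periodic : ∀ t, Function.Periodic (u t) Λ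
  eq : ∀ t x, deriv (fun s => u s x) t =
    - iteratedDeriv 2 (fun y => iteratedDeriv 2 (u t) y - deriv G (u t y)) x


private lemma odeAux_sqrt_le_one_add (x : ℝ) (hx : 0 ≤ x) : Real.sqrt x ≤ 1 + x := by
  nlinarith [Real.sq_sqrt hx, Real.sqrt_nonneg x, sq_nonneg (Real.sqrt x - 1)]

private lemma odeAux_sqrt_mul_le_half {x y : ℝ} (hx : 0 ≤ x) (hy : 0 ≤ y) :
    Real.sqrt (x * y) ≤ (x + y) / 2 := by
  nlinarith [Real.sqrt_mul hx y, Real.sq_sqrt hx, Real.sq_sqrt hy,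
    sq_nonneg (Real.sqrt x - Real.sqrt y), Real.sqrt_nonneg x, Real.sqrt_nonneg y]

private lemma odeAux_sqrt_add_le {x y : ℝ} (hx : 0 ≤ x) (hy : 0 ≤ y) :
    Real.sqrt (x + y) ≤ Real.sqrt x + Real.sqrt y := by
  have h : x + y ≤ (Real.sqrt x + Real.sqrt y) ^ 2 := by
    nlinarith [Real.sq_sqrt hx, Real.sq_sqrt hy,
      mul_nonneg (Real.sqrt_nonneg x) (Real.sqrt_nonneg y)]
  calc Real.sqrt (x + y) ≤ Real.sqrt ((Real.sqrt x + Real.sqrt y) ^ 2) := Real.sqrt_le_sqrt h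
    _ = Real.sqrt x + Real.sqrt y := Real.sqrt_sq (by positivity)

private lemma odeAux_antitoneOn {f g : ℝ → ℝ} {a b : ℝ}
    (hf : ∀ t ∈ Set.Icc a b, HasDerivAt f (g t) t)
    (hg : ∀ t ∈ Set.Icc a b, g t ≤ 0) : AntitoneOn f (Set.Icc a b) := by
  apply antitoneOn_of_deriv_nonpos (convex_Icc a b)
  · exact fun t ht => (hf t ht).continuousAt.continuousWithinAt
  · intro t ht
    rw [interior_Icc] at ht
    exact ((hf t (Set.Ioo_subset_Icc_self ht)).differentiableAt).differentiableWithinAt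
  · intro t ht
    rw [interior_Icc] at ht
    rw [(hf t (Set.Ioo_subset_Icc_self ht)).deriv]
    exact hg t (Set.Ioo_subset_Icc_self ht)

private lemma odeAux_monotoneOn {f g : ℝ → ℝ} {a b : ℝ}
    (hf : ∀ t ∈ Set.Icc a b, HasDerivAt f (g t) t)
    (hg : ∀ t ∈ Set.Icc a b, 0 ≤ g t) : MonotoneOn f (Set.Icc a b) := by
  apply monotoneOn_of_deriv_nonneg (convex_Icc a b)
  · exact fun t ht => (hf t ht).continuousAt.continuousWithinAt
  · intro t ht
    rw [interior_Icc] at ht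
    exact ((hf t (Set.Ioo_subset_Icc_self ht)).differentiableAt).differentiableWithinAt
  · intro t ht
    rw [interior_Icc] at ht
    rw [(hf t (Set.Ioo_subset_Icc_self ht)).deriv]
    exact hg t (Set.Ioo_subset_Icc_self ht)

private lemma odeAux_diss_lower {K c E D Hv : ℝ} (hK : 0 < K) (hE : 0 ≤ E) (hD : 0 ≤ D)
    (hH : 0 ≤ Hv) (h : E ≤ K * (Real.sqrt (Hv * D) + c ^ 2 * D)) :
    E ^ 2 ≤ (4 * K ^ 2 * Hv + 2 * K * c ^ 2 * E) * D := by
  have hS2 := Real.sq_sqrt (mul_nonneg hH hD)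
  have hSn := Real.sqrt_nonneg (Hv * D)
  rcases le_total (Real.sqrt (Hv * D)) (c ^ 2 * D) with hle | hle
  · have h1 : E ≤ 2 * K * (c ^ 2 * D) := by nlinarith
    nlinarith [mul_le_mul_of_nonneg_left h1 hE,
      mul_nonneg (mul_nonneg (by positivity : (0:ℝ) ≤ 4 * K ^ 2) hH) hD]
  · have h1 : E ≤ 2 * K * Real.sqrt (Hv * D) := by nlinarith
    nlinarith [mul_le_mul h1 h1 hE (by positivity),
      mul_nonneg (mul_nonneg (mul_nonneg hK.le (sq_nonneg c)) hE) hD]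

private lemma odeAux_head_bound {K c E D Hv qv hd : ℝ} (hK : 0 < K) (hc : 0 < c)
    (hE : 0 ≤ E) (hD : 0 ≤ D) (hH : 0 ≤ Hv) (hq : 0 ≤ qv)
    (hqb : qv ≤ K * (Real.sqrt (Hv * E) + c * E))
    (hhd : hd ≤ K * Real.sqrt c * (Real.sqrt (qv * D) + E ^ ((3:ℝ)/4) * D ^ ((1:ℝ)/4))) :
    hd ≤ (K * Real.sqrt K + K + 1) * (Hv / c ^ 2 + E + c ^ 2 * D) := by
  have hsc := Real.sqrt_nonneg c
  have hsK := Real.sqrt_nonneg K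
  have hSHE := Real.sqrt_nonneg (Hv * E)
  have hc2 : (0:ℝ) < c ^ 2 := by positivity
  have p1 : Real.sqrt c * Real.sqrt (qv * D) ≤
      Real.sqrt K * ((Hv / c ^ 2 + E) / 4 + c ^ 2 * D / 2 + (E + c ^ 2 * D) / 2) := by
    have e1 : Real.sqrt c * Real.sqrt (qv * D) = Real.sqrt (c * (qv * D)) :=
      (Real.sqrt_mul hc.le _).symm
    have e2 : c * (qv * D) ≤ K * (c * Real.sqrt (Hv * E) * D) + K * (c ^ 2 * E * D) := by
      have h := mul_le_mul_of_nonneg_left hqb (mul_nonneg hc.le hD)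
      nlinarith [h]
    have e3 : Real.sqrt (c * (qv * D)) ≤
        Real.sqrt (K * (c * Real.sqrt (Hv * E) * D)) + Real.sqrt (K * (c ^ 2 * E * D)) := by
      refine (Real.sqrt_le_sqrt e2).trans (odeAux_sqrt_add_le ?_ ?_)
      · exact mul_nonneg hK.le (mul_nonneg (mul_nonneg hc.le hSHE) hD)
      · exact mul_nonneg hK.le (mul_nonneg (mul_nonneg (sq_nonneg c) hE) hD)
    have e6 : Real.sqrt (Hv * E) / c ≤ (Hv / c ^ 2 + E) / 2 := by
      have e7 : Real.sqrt (Hv * E) / c = Real.sqrt (Hv / c ^ 2 * E) := by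
        rw [show Hv / c ^ 2 * E = Hv * E / c ^ 2 by ring, Real.sqrt_div (mul_nonneg hH hE),
          Real.sqrt_sq hc.le]
      rw [e7]
      exact odeAux_sqrt_mul_le_half (div_nonneg hH hc2.le) hE
    have e4 : Real.sqrt (K * (c * Real.sqrt (Hv * E) * D)) ≤
        Real.sqrt K * ((Hv / c ^ 2 + E) / 4 + c ^ 2 * D / 2) := by
      rw [Real.sqrt_mul hK.le]
      apply mul_le_mul_of_nonneg_left _ hsK
      have e5 : c * Real.sqrt (Hv * E) * D = (Real.sqrt (Hv * E) / c) * (c ^ 2 * D) := by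
        field_simp
      rw [e5]
      calc Real.sqrt (Real.sqrt (Hv * E) / c * (c ^ 2 * D))
          ≤ (Real.sqrt (Hv * E) / c + c ^ 2 * D) / 2 :=
            odeAux_sqrt_mul_le_half (div_nonneg hSHE hc.le) (mul_nonneg (sq_nonneg c) hD)
        _ ≤ (Hv / c ^ 2 + E) / 4 + c ^ 2 * D / 2 := by linarith [e6]
    have e8 : Real.sqrt (K * (c ^ 2 * E * D)) ≤ Real.sqrt K * ((E + c ^ 2 * D) / 2) := by
      rw [Real.sqrt_mul hK.le]
      apply mul_le_mul_of_nonneg_left _ hsK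
      rw [show c ^ 2 * E * D = E * (c ^ 2 * D) by ring]
      exact odeAux_sqrt_mul_le_half hE (mul_nonneg (sq_nonneg c) hD)
    rw [e1]
    calc Real.sqrt (c * (qv * D)) ≤ _ := e3
      _ ≤ Real.sqrt K * ((Hv / c ^ 2 + E) / 4 + c ^ 2 * D / 2) +
          Real.sqrt K * ((E + c ^ 2 * D) / 2) := add_le_add e4 e8
      _ = Real.sqrt K * ((Hv / c ^ 2 + E) / 4 + c ^ 2 * D / 2 + (E + c ^ 2 * D) / 2) := by ring
  have p2 : Real.sqrt c * (E ^ ((3:ℝ)/4) * D ^ ((1:ℝ)/4)) ≤ 3 / 4 * E + 1 / 4 * (c ^ 2 * D) := by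
    have heE : (0:ℝ) ≤ E ^ ((1:ℝ)/4) := Real.rpow_nonneg hE _
    have hdD : (0:ℝ) ≤ D ^ ((1:ℝ)/4) := Real.rpow_nonneg hD _
    set e := E ^ ((1:ℝ)/4) with hedef
    set d := D ^ ((1:ℝ)/4) with hddef
    have he4 : e ^ 4 = E := by
      rw [hedef, ← Real.rpow_natCast (E ^ ((1:ℝ)/4)) 4, ← Real.rpow_mul hE]; norm_num
    have hd4 : d ^ 4 = D := by
      rw [hddef, ← Real.rpow_natCast (D ^ ((1:ℝ)/4)) 4, ← Real.rpow_mul hD]; norm_num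
    have hE34 : E ^ ((3:ℝ)/4) = e ^ 3 := by
      rw [hedef, ← Real.rpow_natCast (E ^ ((1:ℝ)/4)) 3, ← Real.rpow_mul hE]; norm_num
    have hg2 : Real.sqrt c ^ 2 = c := Real.sq_sqrt hc.le
    have hg4 : c ^ 2 = Real.sqrt c ^ 4 := by
      rw [show Real.sqrt c ^ 4 = (Real.sqrt c ^ 2) ^ 2 by ring, hg2]
    rw [hE34, ← he4, ← hd4, hg4]
    have hkey : (0:ℝ) ≤ 3 * e ^ 2 + 2 * e * (d * Real.sqrt c) + (d * Real.sqrt c) ^ 2 := by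
      nlinarith [mul_nonneg heE (mul_nonneg hdD hsc), sq_nonneg e, sq_nonneg (d * Real.sqrt c)]
    nlinarith [mul_nonneg (sq_nonneg (e - d * Real.sqrt c)) hkey, heE, hdD, hsc]
  have hfin : 0 ≤ Hv / c ^ 2 := div_nonneg hH hc2.le
  have hcD : 0 ≤ c ^ 2 * D := mul_nonneg (sq_nonneg c) hD
  calc hd ≤ K * Real.sqrt c * (Real.sqrt (qv * D) + E ^ ((3:ℝ)/4) * D ^ ((1:ℝ)/4)) := hhd
    _ = K * (Real.sqrt c * Real.sqrt (qv * D)) +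
        K * (Real.sqrt c * (E ^ ((3:ℝ)/4) * D ^ ((1:ℝ)/4))) := by ring
    _ ≤ K * (Real.sqrt K * ((Hv / c ^ 2 + E) / 4 + c ^ 2 * D / 2 + (E + c ^ 2 * D) / 2)) +
        K * (3 / 4 * E + 1 / 4 * (c ^ 2 * D)) :=
          add_le_add (mul_le_mul_of_nonneg_left p1 hK.le) (mul_le_mul_of_nonneg_left p2 hK.le)
    _ ≤ (K * Real.sqrt K + K + 1) * (Hv / c ^ 2 + E + c ^ 2 * D) := by
        nlinarith [mul_nonneg (mul_nonneg hK.le hsK) hfin, mul_nonneg (mul_nonneg hK.le hsK) hE,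
          mul_nonneg (mul_nonneg hK.le hsK) hcD, mul_nonneg hK.le hfin, mul_nonneg hK.le hE,
          mul_nonneg hK.le hcD, hfin, hE, hcD]

private lemma odeAux_tail_young {K γ j n ψ D qv E hd : ℝ} (hK : 0 < K) (hγ : 0 < γ)
    (hj : 0 ≤ j) (hn : 0 < n) (hψ : 0 < ψ) (hD : 0 ≤ D) (hE : 0 ≤ E) (hq : 0 ≤ qv)
    (hqb : qv * Real.sqrt ψ ≤ j ^ 2) (hEb : E * ψ ≤ n ^ 4)
    (hhd : hd ≤ K * γ * (Real.sqrt (qv * D) + E ^ ((3:ℝ)/4) * D ^ ((1:ℝ)/4))) :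
    hd ≤ K * γ * (j / n ^ 2 + 1) * (ψ ^ ((3:ℝ)/4) * D) +
      K * γ * (j * n ^ 2 + n ^ 4) * ψ ^ (-((5:ℝ)/4)) := by
  have hw : (0:ℝ) < ψ ^ ((1:ℝ)/4) := Real.rpow_pos_of_pos hψ _
  have hr : (0:ℝ) ≤ D ^ ((1:ℝ)/4) := Real.rpow_nonneg hD _
  set w := ψ ^ ((1:ℝ)/4) with hwdef
  set r := D ^ ((1:ℝ)/4) with hrdef
  have hw0 : w ≠ 0 := ne_of_gt hw
  have hn0 : n ≠ 0 := ne_of_gt hn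
  have hw4 : w ^ 4 = ψ := by
    rw [hwdef, ← Real.rpow_natCast (ψ ^ ((1:ℝ)/4)) 4, ← Real.rpow_mul hψ.le]; norm_num
  have hw2 : w ^ 2 = Real.sqrt ψ := by
    rw [hwdef, ← Real.rpow_natCast (ψ ^ ((1:ℝ)/4)) 2, ← Real.rpow_mul hψ.le, Real.sqrt_eq_rpow]
    norm_num
  have hr4 : r ^ 4 = D := by
    rw [hrdef, ← Real.rpow_natCast (D ^ ((1:ℝ)/4)) 4, ← Real.rpow_mul hD]; norm_num
  have hr2 : r ^ 2 = Real.sqrt D := by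
    rw [hrdef, ← Real.rpow_natCast (D ^ ((1:ℝ)/4)) 2, ← Real.rpow_mul hD, Real.sqrt_eq_rpow]
    norm_num
  have hψ34 : ψ ^ ((3:ℝ)/4) = w ^ 3 := by
    rw [hwdef, ← Real.rpow_natCast (ψ ^ ((1:ℝ)/4)) 3, ← Real.rpow_mul hψ.le]; norm_num
  have hψ54 : ψ ^ (-((5:ℝ)/4)) = (w ^ 5)⁻¹ := by
    rw [hwdef, ← Real.rpow_natCast (ψ ^ ((1:ℝ)/4)) 5, ← Real.rpow_mul hψ.le, ← Real.rpow_neg hψ.le]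
    norm_num
  have hsq : Real.sqrt (qv * D) ≤ j / w * r ^ 2 := by
    have h1 : qv ≤ (j / w) ^ 2 := by
      rw [div_pow, le_div_iff₀ (by positivity : (0:ℝ) < w ^ 2)]
      calc qv * w ^ 2 = qv * Real.sqrt ψ := by rw [hw2]
        _ ≤ j ^ 2 := hqb
    calc Real.sqrt (qv * D) = Real.sqrt qv * Real.sqrt D := Real.sqrt_mul hq D
      _ ≤ (j / w) * Real.sqrt D := by
          refine mul_le_mul_of_nonneg_right ?_ (Real.sqrt_nonneg D)
          calc Real.sqrt qv ≤ Real.sqrt ((j / w) ^ 2) := Real.sqrt_le_sqrt h1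
            _ = j / w := Real.sqrt_sq (div_nonneg hj hw.le)
      _ = j / w * r ^ 2 := by rw [hr2]
  have hE34 : E ^ ((3:ℝ)/4) ≤ n ^ 3 / w ^ 3 := by
    have h1 : E ≤ (n / w) ^ 4 := by
      rw [div_pow, le_div_iff₀ (by positivity : (0:ℝ) < w ^ 4)]
      calc E * w ^ 4 = E * ψ := by rw [hw4]
        _ ≤ n ^ 4 := hEb
    calc E ^ ((3:ℝ)/4) ≤ ((n / w) ^ 4) ^ ((3:ℝ)/4) := Real.rpow_le_rpow hE h1 (by norm_num)
      _ = (n / w) ^ 3 := by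
          rw [← Real.rpow_natCast (n / w) 4, ← Real.rpow_mul (div_nonneg hn.le hw.le),
            ← Real.rpow_natCast (n / w) 3]
          norm_num
      _ = n ^ 3 / w ^ 3 := div_pow n w 3
  have hpoly : j * (n ^ 2 * (w ^ 4 * r ^ 2)) + n ^ 5 * (w ^ 2 * r)
      ≤ j * (w ^ 8 * r ^ 4) + n ^ 2 * (w ^ 8 * r ^ 4) + j * n ^ 4 + n ^ 6 := by
    have hq2 : (0:ℝ) ≤ 3 * n ^ 2 + 2 * n * (r * w ^ 2) + (r * w ^ 2) ^ 2 := by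
      nlinarith [mul_nonneg hn.le (mul_nonneg hr (sq_nonneg w)), sq_nonneg n,
        sq_nonneg (r * w ^ 2)]
    have hq1 : 0 ≤ j * (r ^ 2 * w ^ 4 - n ^ 2) ^ 2 := mul_nonneg hj (sq_nonneg _)
    have hq3 : 0 ≤ n ^ 2 * ((n - r * w ^ 2) ^ 2 *
        (3 * n ^ 2 + 2 * n * (r * w ^ 2) + (r * w ^ 2) ^ 2)) :=
      mul_nonneg (sq_nonneg n) (mul_nonneg (sq_nonneg _) hq2)
    have hq4 : 0 ≤ j * (n ^ 2 * (w ^ 4 * r ^ 2)) :=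
      mul_nonneg hj (mul_nonneg (sq_nonneg n) (mul_nonneg (pow_nonneg hw.le 4) (sq_nonneg r)))
    nlinarith [hq1, hq3, hq4, pow_nonneg hn.le 6,
      mul_nonneg (sq_nonneg n) (mul_nonneg (pow_nonneg hw.le 8) (pow_nonneg hr 4))]
  have hfrac : j / w * r ^ 2 + n ^ 3 / w ^ 3 * r
      ≤ (j / n ^ 2 + 1) * (w ^ 3 * r ^ 4) + (j * n ^ 2 + n ^ 4) * (w ^ 5)⁻¹ := by
    rw [← sub_nonneg]
    have hexpand : (j / n ^ 2 + 1) * (w ^ 3 * r ^ 4) + (j * n ^ 2 + n ^ 4) * (w ^ 5)⁻¹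
        - (j / w * r ^ 2 + n ^ 3 / w ^ 3 * r)
        = (j * (w ^ 8 * r ^ 4) + n ^ 2 * (w ^ 8 * r ^ 4) + j * n ^ 4 + n ^ 6
            - (j * (n ^ 2 * (w ^ 4 * r ^ 2)) + n ^ 5 * (w ^ 2 * r))) / (n ^ 2 * w ^ 5) := by
      field_simp
      ring
    rw [hexpand]
    exact div_nonneg (by linarith [hpoly]) (by positivity)
  have hS : Real.sqrt (qv * D) + E ^ ((3:ℝ)/4) * r
      ≤ (j / n ^ 2 + 1) * (w ^ 3 * r ^ 4) + (j * n ^ 2 + n ^ 4) * (w ^ 5)⁻¹ := by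
    have h2 : E ^ ((3:ℝ)/4) * r ≤ n ^ 3 / w ^ 3 * r := mul_le_mul_of_nonneg_right hE34 hr
    linarith [hsq, h2]
  calc hd ≤ K * γ * (Real.sqrt (qv * D) + E ^ ((3:ℝ)/4) * r) := hhd
    _ ≤ K * γ * ((j / n ^ 2 + 1) * (w ^ 3 * r ^ 4) + (j * n ^ 2 + n ^ 4) * (w ^ 5)⁻¹) :=
        mul_le_mul_of_nonneg_left hS (mul_nonneg hK.le hγ.le)
    _ = K * γ * (j / n ^ 2 + 1) * (ψ ^ ((3:ℝ)/4) * D) +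
        K * γ * (j * n ^ 2 + n ^ 4) * ψ ^ (-((5:ℝ)/4)) := by
        rw [hψ34, hψ54, ← hr4]; ring

private lemma odeAux_improve
    {K cstar tstar A M C₆ C₈ y N J n j : ℝ}
    {Ebar D H q Hd : ℝ → ℝ}
    (hK : 0 < K) (hcpos : 0 < cstar) (hMpos : 0 < M) (hApos : 0 < A) (hA1 : 1 ≤ A)
    (hC₈def : C₈ = 8 * K ^ 2 + 4 * K + 2) (hypos : 0 < y)
    (hnpos : 0 < n) (hn4 : n ^ 4 = N) (hj0 : 0 ≤ j) (hj2 : j ^ 2 = J)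
    (hNdef : N = C₈ * (A * M)) (hJdef : J = 2 * K * (C₈ * (A * M)))
    (hyge : 36 * K * (2 + 2 * K) * C₈ ≤ y) (hAC₆ : A = 4 * C₆)
    (hE0 : ∀ t ∈ Set.Icc (0:ℝ) tstar, 0 ≤ Ebar t)
    (hD0 : ∀ t ∈ Set.Icc (0:ℝ) tstar, 0 ≤ D t)
    (hq0 : ∀ t ∈ Set.Icc (0:ℝ) tstar, 0 ≤ q t)
    (hEd : ∀ t ∈ Set.Icc (0:ℝ) tstar, HasDerivAt Ebar (-(D t)) t)
    (hHder : ∀ t ∈ Set.Icc (0:ℝ) tstar, HasDerivAt H (Hd t) t)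
    (hHdb : ∀ t ∈ Set.Icc (0:ℝ) tstar, Hd t ≤ K * Real.sqrt cstar *
      (Real.sqrt (q t * D t) + Ebar t ^ ((3:ℝ)/4) * D t ^ ((1:ℝ)/4)))
    (halg2 : ∀ t ∈ Set.Icc (0:ℝ) tstar,
      q t ≤ K * (Real.sqrt (H t * Ebar t) + cstar * Ebar t))
    (hc2EM : ∀ s ∈ Set.Icc (0:ℝ) tstar, cstar ^ 2 * Ebar s ≤ M)
    (hdecay : ∀ T ∈ Set.Icc (0:ℝ) tstar, ∀ W : ℝ,
      (∀ σ ∈ Set.Icc (0:ℝ) T, 4 * K ^ 2 * H σ + 2 * K * cstar ^ 2 * Ebar σ ≤ W) →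
      ∀ s ∈ Set.Icc (0:ℝ) T, s * Ebar s ≤ W)
    (hhead : ∀ s ∈ Set.Icc (0:ℝ) tstar, s ≤ y ^ 4 * cstar ^ 2 → H s ≤ C₆ * M) :
    ∀ T ∈ Set.Icc (0:ℝ) tstar, (∀ s ∈ Set.Icc (0:ℝ) T, H s ≤ A * M) →
      H T ≤ A / 2 * M := by
  have hc2pos : 0 < cstar ^ 2 := by positivity
  have hγpos : 0 < Real.sqrt cstar := Real.sqrt_pos.mpr hcpos
  have hAM0 : 0 ≤ A * M := (mul_pos hApos hMpos).le
  have hM0 : 0 ≤ M := hMpos.le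
  have hA1' : (0:ℝ) ≤ A - 1 := by linarith
  have hC₈pos : 0 < C₈ := by rw [hC₈def]; positivity
  have hC₈1 : 1 ≤ C₈ := by rw [hC₈def]; nlinarith [sq_nonneg K]
  have hNpos : 0 < N := by rw [hNdef]; exact mul_pos hC₈pos (mul_pos hApos hMpos)
  have hC₆pos : 0 < C₆ := by linarith
  intro T hT hbs
  by_cases hTs : T ≤ y ^ 4 * cstar ^ 2
  · have h1 := hhead T hT hTs
    have h2 : A / 2 * M = 2 * (C₆ * M) := by rw [hAC₆]; ring
    have h3 : 0 ≤ C₆ * M := mul_nonneg hC₆pos.le hM0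
    linarith
  · push_neg at hTs
    have hWT : ∀ σ ∈ Set.Icc (0:ℝ) T, 4 * K ^ 2 * H σ + 2 * K * cstar ^ 2 * Ebar σ
        ≤ 4 * K ^ 2 * (A * M) + 2 * K * M := by
      intro σ hσ
      have hσI : σ ∈ Set.Icc (0:ℝ) tstar := ⟨hσ.1, hσ.2.trans hT.2⟩
      have h1 := hbs σ hσ
      have h2 := hc2EM σ hσI
      linarith [mul_le_mul_of_nonneg_left h1 (by positivity : (0:ℝ) ≤ 4 * K ^ 2),
        mul_le_mul_of_nonneg_left h2 (by linarith : (0:ℝ) ≤ 2 * K)]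
    have hdec := hdecay T hT _ hWT
    have hEN : ∀ s ∈ Set.Icc (0:ℝ) T, Ebar s * (s + cstar ^ 2) ≤ N := by
      intro s hs
      have hsI : s ∈ Set.Icc (0:ℝ) tstar := ⟨hs.1, hs.2.trans hT.2⟩
      have h1 := hdec s hs
      have h2 := hc2EM s hsI
      rw [hNdef, hC₈def]
      linarith [mul_nonneg (mul_nonneg hK.le hM0) hA1',
        mul_nonneg (mul_nonneg (mul_nonneg hK.le hK.le) hM0) hA1', hM0,
        mul_nonneg hM0 hA1', mul_nonneg (mul_nonneg hK.le hK.le) hM0,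
        mul_nonneg hK.le hM0]
    have hqJ : ∀ s ∈ Set.Icc (0:ℝ) T, q s * Real.sqrt (s + cstar ^ 2) ≤ J := by
      intro s hs
      have hsI : s ∈ Set.Icc (0:ℝ) tstar := ⟨hs.1, hs.2.trans hT.2⟩
      have hEs := hE0 s hsI
      have hq2K : q s ≤ 2 * K * Real.sqrt (A * M * Ebar s) := by
        have h1 := halg2 s hsI
        have h2 : Real.sqrt (H s * Ebar s) ≤ Real.sqrt (A * M * Ebar s) := by
          apply Real.sqrt_le_sqrt
          exact mul_le_mul_of_nonneg_right (hbs s hs) hEs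
        have h3 : cstar * Ebar s ≤ Real.sqrt (A * M * Ebar s) := by
          rw [show cstar * Ebar s = Real.sqrt ((cstar * Ebar s) ^ 2) from
            (Real.sqrt_sq (mul_nonneg hcpos.le hEs)).symm]
          apply Real.sqrt_le_sqrt
          have h4 := hc2EM s hsI
          have h5 : M * Ebar s ≤ A * M * Ebar s :=
            mul_le_mul_of_nonneg_right (le_mul_of_one_le_left hM0 hA1) hEs
          linarith [mul_le_mul_of_nonneg_right h4 hEs, h5]
        have h23 := mul_le_mul_of_nonneg_left (add_le_add h2 h3) hK.le
        linarith [h23, h1]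
      have h4 := mul_le_mul_of_nonneg_right hq2K (Real.sqrt_nonneg (s + cstar ^ 2))
      have h5 : Real.sqrt (A * M * Ebar s) * Real.sqrt (s + cstar ^ 2)
          = Real.sqrt (A * M * Ebar s * (s + cstar ^ 2)) :=
        (Real.sqrt_mul (mul_nonneg hAM0 hEs) _).symm
      have h6 : Real.sqrt (A * M * Ebar s * (s + cstar ^ 2)) ≤ Real.sqrt (A * M * N) := by
        apply Real.sqrt_le_sqrt
        linarith [mul_le_mul_of_nonneg_left (hEN s hs) hAM0]
      have h7 : Real.sqrt (A * M * N) = Real.sqrt C₈ * (A * M) := by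
        rw [hNdef, show A * M * (C₈ * (A * M)) = C₈ * (A * M) ^ 2 by ring,
          Real.sqrt_mul hC₈pos.le, Real.sqrt_sq hAM0]
      have h8 : Real.sqrt C₈ ≤ C₈ := by
        calc Real.sqrt C₈ ≤ Real.sqrt (C₈ ^ 2) := Real.sqrt_le_sqrt (by
              linarith [mul_nonneg hC₈pos.le (show (0:ℝ) ≤ C₈ - 1 by linarith)])
          _ = C₈ := Real.sqrt_sq hC₈pos.le
      rw [hJdef]
      calc q s * Real.sqrt (s + cstar ^ 2)
          ≤ 2 * K * Real.sqrt (A * M * Ebar s) * Real.sqrt (s + cstar ^ 2) := h4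
        _ = 2 * K * (Real.sqrt (A * M * Ebar s) * Real.sqrt (s + cstar ^ 2)) := by ring
        _ = 2 * K * Real.sqrt (A * M * Ebar s * (s + cstar ^ 2)) := by rw [h5]
        _ ≤ 2 * K * Real.sqrt (A * M * N) := by
            apply mul_le_mul_of_nonneg_left h6 (by linarith)
        _ = 2 * K * (Real.sqrt C₈ * (A * M)) := by rw [h7]
        _ ≤ 2 * K * (C₈ * (A * M)) := by
            apply mul_le_mul_of_nonneg_left
              (mul_le_mul_of_nonneg_right h8 hAM0) (by linarith)
    obtain ⟨sstar, hsstardef⟩ : ∃ x : ℝ, x = y ^ 4 * cstar ^ 2 := ⟨_, rfl⟩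
    have hsspos : 0 < sstar := by rw [hsstardef]; exact mul_pos (pow_pos hypos 4) hc2pos
    have hssT : sstar ≤ T := by rw [hsstardef]; exact hTs.le
    have hsubT : Set.Icc sstar T ⊆ Set.Icc (0:ℝ) tstar :=
      fun σ hσ => ⟨hsspos.le.trans hσ.1, hσ.2.trans hT.2⟩
    have hψpos : ∀ σ : ℝ, sstar ≤ σ → 0 < σ + cstar ^ 2 := fun σ h => by linarith
    have htp : ∀ σ ∈ Set.Icc sstar T,
        Hd σ ≤ K * Real.sqrt cstar * (j / n ^ 2 + 1) * ((σ + cstar ^ 2) ^ ((3:ℝ)/4) * D σ)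
          + K * Real.sqrt cstar * (j * n ^ 2 + n ^ 4) * (σ + cstar ^ 2) ^ (-((5:ℝ)/4)) := by
      intro σ hσ
      have hσI := hsubT hσ
      have hσT : σ ∈ Set.Icc (0:ℝ) T := ⟨hsspos.le.trans hσ.1, hσ.2⟩
      refine odeAux_tail_young hK hγpos hj0 hnpos (hψpos σ hσ.1)
        (hD0 σ hσI) (hE0 σ hσI) (hq0 σ hσI) ?_ ?_ ?_
      · rw [hj2]
        exact hqJ σ hσT
      · rw [hn4]
        exact hEN σ hσT
      · exact hHdb σ hσI
    obtain ⟨P, hPdef⟩ : ∃ x : ℝ, x = K * Real.sqrt cstar * (j / n ^ 2 + 1) := ⟨_, rfl⟩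
    obtain ⟨R, hRdef⟩ : ∃ x : ℝ, x = K * Real.sqrt cstar * (j * n ^ 2 + n ^ 4) := ⟨_, rfl⟩
    rw [← hPdef, ← hRdef] at htp
    have hPpos : 0 ≤ P := by
      rw [hPdef]
      exact mul_nonneg (mul_nonneg hK.le hγpos.le)
        (add_nonneg (div_nonneg hj0 (sq_nonneg n)) zero_le_one)
    have hRpos : 0 ≤ R := by
      rw [hRdef]
      exact mul_nonneg (mul_nonneg hK.le hγpos.le)
        (add_nonneg (mul_nonneg hj0 (sq_nonneg n)) (pow_nonneg hnpos.le 4))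
    have hPN : P * N = R := by
      rw [hPdef, hRdef, ← hn4]
      field_simp
    have hΦanti : AntitoneOn (fun σ => H σ + P * ((σ + cstar ^ 2) ^ ((3:ℝ)/4) * Ebar σ)
        + 8 * R * (σ + cstar ^ 2) ^ (-((1:ℝ)/4))) (Set.Icc sstar T) := by
      apply odeAux_antitoneOn (g := fun σ =>
        Hd σ + P * ((1 * ((3:ℝ)/4) * (σ + cstar ^ 2) ^ ((3:ℝ)/4 - 1)) * Ebar σ
          + (σ + cstar ^ 2) ^ ((3:ℝ)/4) * -(D σ))
        + 8 * R * (1 * (-((1:ℝ)/4)) * (σ + cstar ^ 2) ^ (-((1:ℝ)/4) - 1)))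
      · intro σ hσ
        have hσI := hsubT hσ
        have hψ := hψpos σ hσ.1
        have hψd : HasDerivAt (fun x : ℝ => x + cstar ^ 2) 1 σ :=
          (hasDerivAt_id σ).add_const _
        exact ((hHder σ hσI).add
          ((((hψd.rpow_const (Or.inl hψ.ne')).mul (hEd σ hσI))).const_mul P)).add
          ((hψd.rpow_const (Or.inl hψ.ne')).const_mul (8 * R))
      · intro σ hσ
        have hσI := hsubT hσ
        have hσT : σ ∈ Set.Icc (0:ℝ) T := ⟨hsspos.le.trans hσ.1, hσ.2⟩
        have hψ := hψpos σ hσ.1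
        have he1 : ((3:ℝ)/4 - 1) = -((1:ℝ)/4) := by norm_num
        have he2 : (-((1:ℝ)/4) - 1) = -((5:ℝ)/4) := by norm_num
        rw [he1, he2]
        have hb := htp σ hσ
        have hEψ := hEN σ hσT
        have hrp14 : (0:ℝ) ≤ (σ + cstar ^ 2) ^ (-((1:ℝ)/4)) := Real.rpow_nonneg hψ.le _
        have hrp54 : (0:ℝ) ≤ (σ + cstar ^ 2) ^ (-((5:ℝ)/4)) := Real.rpow_nonneg hψ.le _
        have hkey : (σ + cstar ^ 2) ^ (-((1:ℝ)/4)) * Ebar σ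
            ≤ N * (σ + cstar ^ 2) ^ (-((5:ℝ)/4)) := by
          have h1 : Ebar σ ≤ N * (σ + cstar ^ 2)⁻¹ := by
            rw [← div_eq_mul_inv, le_div_iff₀ hψ]
            exact hEψ
          calc (σ + cstar ^ 2) ^ (-((1:ℝ)/4)) * Ebar σ
              ≤ (σ + cstar ^ 2) ^ (-((1:ℝ)/4)) * (N * (σ + cstar ^ 2)⁻¹) :=
                mul_le_mul_of_nonneg_left h1 hrp14
            _ = N * ((σ + cstar ^ 2) ^ (-((1:ℝ)/4)) * (σ + cstar ^ 2)⁻¹) := by ring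
            _ = N * (σ + cstar ^ 2) ^ (-((5:ℝ)/4)) := by
                rw [← Real.rpow_neg_one (σ + cstar ^ 2), ← Real.rpow_add hψ]
                norm_num
        have hkey2 : P * (N * (σ + cstar ^ 2) ^ (-((5:ℝ)/4)))
            = R * (σ + cstar ^ 2) ^ (-((5:ℝ)/4)) := by
          rw [← hPN]; ring
        have hkey3 : P * ((σ + cstar ^ 2) ^ (-((1:ℝ)/4)) * Ebar σ)
            ≤ R * (σ + cstar ^ 2) ^ (-((5:ℝ)/4)) := by
          calc P * ((σ + cstar ^ 2) ^ (-((1:ℝ)/4)) * Ebar σ)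
              ≤ P * (N * (σ + cstar ^ 2) ^ (-((5:ℝ)/4))) :=
                mul_le_mul_of_nonneg_left hkey hPpos
            _ = R * (σ + cstar ^ 2) ^ (-((5:ℝ)/4)) := hkey2
        linarith [hb, hkey3, mul_nonneg hRpos hrp54]
    have hsmem : sstar ∈ Set.Icc sstar T := ⟨le_rfl, hssT⟩
    have hTmem : T ∈ Set.Icc sstar T := ⟨hssT, le_rfl⟩
    have hΦ := hΦanti hsmem hTmem hssT
    dsimp only at hΦ
    have hψT := hψpos T hssT
    have hψs := hψpos sstar le_rfl
    have hHT : H T ≤ H T + P * ((T + cstar ^ 2) ^ ((3:ℝ)/4) * Ebar T)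
        + 8 * R * (T + cstar ^ 2) ^ (-((1:ℝ)/4)) := by
      have h1 : 0 ≤ P * ((T + cstar ^ 2) ^ ((3:ℝ)/4) * Ebar T) :=
        mul_nonneg hPpos (mul_nonneg (Real.rpow_nonneg hψT.le _) (hE0 T hT))
      have h2 : 0 ≤ 8 * R * (T + cstar ^ 2) ^ (-((1:ℝ)/4)) :=
        mul_nonneg (by linarith) (Real.rpow_nonneg hψT.le _)
      linarith
    have hssI : sstar ∈ Set.Icc (0:ℝ) tstar := ⟨hsspos.le, hssT.trans hT.2⟩
    have hHs : H sstar ≤ C₆ * M := hhead sstar hssI (le_of_eq hsstardef)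
    have hmid : P * ((sstar + cstar ^ 2) ^ ((3:ℝ)/4) * Ebar sstar)
        ≤ R * (sstar + cstar ^ 2) ^ (-((1:ℝ)/4)) := by
      have hEψ := hEN sstar ⟨hsspos.le, hssT⟩
      have h1 : Ebar sstar ≤ N * (sstar + cstar ^ 2)⁻¹ := by
        rw [← div_eq_mul_inv, le_div_iff₀ hψs]
        exact hEψ
      have h2 : (sstar + cstar ^ 2) ^ ((3:ℝ)/4) * (sstar + cstar ^ 2)⁻¹
          = (sstar + cstar ^ 2) ^ (-((1:ℝ)/4)) := by
        rw [← Real.rpow_neg_one (sstar + cstar ^ 2), ← Real.rpow_add hψs]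
        norm_num
      calc P * ((sstar + cstar ^ 2) ^ ((3:ℝ)/4) * Ebar sstar)
          ≤ P * ((sstar + cstar ^ 2) ^ ((3:ℝ)/4) * (N * (sstar + cstar ^ 2)⁻¹)) := by
            apply mul_le_mul_of_nonneg_left _ hPpos
            exact mul_le_mul_of_nonneg_left h1 (Real.rpow_nonneg hψs.le _)
        _ = P * N * ((sstar + cstar ^ 2) ^ ((3:ℝ)/4) * (sstar + cstar ^ 2)⁻¹) := by ring
        _ = R * (sstar + cstar ^ 2) ^ (-((1:ℝ)/4)) := by rw [h2, hPN]
    have htail : 9 * (R * (sstar + cstar ^ 2) ^ (-((1:ℝ)/4))) ≤ A / 4 * M := by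
      have hyγpos : 0 < y * Real.sqrt cstar := mul_pos hypos hγpos
      have hγ4 : Real.sqrt cstar ^ 4 = cstar ^ 2 := by
        rw [show Real.sqrt cstar ^ 4 = (Real.sqrt cstar ^ 2) ^ 2 by ring,
          Real.sq_sqrt hcpos.le]
      have h1 : (y * Real.sqrt cstar) ^ 4 ≤ sstar + cstar ^ 2 := by
        rw [mul_pow, hγ4, hsstardef]
        linarith
      have h2 : (sstar + cstar ^ 2) ^ (-((1:ℝ)/4)) ≤ ((y * Real.sqrt cstar) ^ 4) ^ (-((1:ℝ)/4)) := by
        rw [Real.rpow_neg hψs.le, Real.rpow_neg (by positivity)]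
        exact inv_anti₀ (Real.rpow_pos_of_pos (by positivity) _)
          (Real.rpow_le_rpow (by positivity) h1 (by norm_num))
      have h3 : ((y * Real.sqrt cstar) ^ 4) ^ (-((1:ℝ)/4)) = (y * Real.sqrt cstar)⁻¹ := by
        rw [Real.rpow_neg (by positivity), ← Real.rpow_natCast (y * Real.sqrt cstar) 4,
          ← Real.rpow_mul hyγpos.le]
        norm_num
      have hRb : R ≤ K * Real.sqrt cstar * ((2 + 2 * K) * (C₈ * (A * M))) := by
        rw [hRdef]
        have hjn : j * n ^ 2 ≤ (1 + 2 * K) * (C₈ * (A * M)) := by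
          have hn2 : n ^ 2 = Real.sqrt N := by
            have e0 : Real.sqrt (n ^ 4) = Real.sqrt N := by rw [hn4]
            rw [show n ^ 4 = (n ^ 2) ^ 2 by ring, Real.sqrt_sq (sq_nonneg n)] at e0
            exact e0
          have hjsq : j = Real.sqrt J := by rw [← hj2, Real.sqrt_sq hj0]
          have e1 : j * n ^ 2 = Real.sqrt (J * N) := by
            rw [hjsq, hn2, ← Real.sqrt_mul (by rw [← hj2]; positivity)]
          have e2 : Real.sqrt (J * N) = Real.sqrt (2 * K) * (C₈ * (A * M)) := by
            rw [hJdef, hNdef,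
              show 2 * K * (C₈ * (A * M)) * (C₈ * (A * M)) = 2 * K * (C₈ * (A * M)) ^ 2
                by ring,
              Real.sqrt_mul (by positivity), Real.sqrt_sq (mul_nonneg hC₈pos.le hAM0)]
          rw [e1, e2]
          have h5 := odeAux_sqrt_le_one_add (2 * K) (by positivity)
          linarith [mul_le_mul_of_nonneg_right h5 (mul_nonneg hC₈pos.le hAM0)]
        have hn4' : n ^ 4 = C₈ * (A * M) := by rw [hn4, hNdef]
        rw [hn4']
        linarith [mul_le_mul_of_nonneg_left hjn (mul_nonneg hK.le hγpos.le)]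
      have h9 : 9 * (R * (sstar + cstar ^ 2) ^ (-((1:ℝ)/4)))
          ≤ 9 * ((K * Real.sqrt cstar * ((2 + 2 * K) * (C₈ * (A * M))))
            * (y * Real.sqrt cstar)⁻¹) := by
        apply mul_le_mul_of_nonneg_left _ (by norm_num)
        apply mul_le_mul hRb (h2.trans_eq h3) (Real.rpow_nonneg hψs.le _)
        exact mul_nonneg (mul_nonneg hK.le hγpos.le)
          (mul_nonneg (by linarith : (0:ℝ) ≤ 2 + 2 * K) (mul_nonneg hC₈pos.le hAM0))
      have h10 : 9 * ((K * Real.sqrt cstar * ((2 + 2 * K) * (C₈ * (A * M))))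
          * (y * Real.sqrt cstar)⁻¹) = 9 * K * (2 + 2 * K) * C₈ * (A * M) / y := by
        field_simp
      rw [h10] at h9
      have h11 : 9 * K * (2 + 2 * K) * C₈ * (A * M) / y ≤ A / 4 * M := by
        rw [div_le_iff₀ hypos]
        linarith [mul_le_mul_of_nonneg_left hyge
          (mul_nonneg (by linarith : (0:ℝ) ≤ A / 4) hM0)]
      linarith
    have hC₆A : C₆ * M = A / 4 * M := by rw [hAC₆]; ring
    linarith [hHT, hΦ, hHs, hmid, htail]

/-- ODE lemma (lemma 1.5 of Otto–Westdickenberg): coupled differential and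
algebraic inequalities for nonnegative quantities `Ē, D, H̄, q` on `[0, t*]` imply
algebraic-in-time decay of `Ē` and uniform control of `q` and `H̄`. -/
theorem ode_lemma :
    ∀ K : ℝ, 0 < K → ∃ C : ℝ, 0 < C ∧
    ∀ (tstar cstar : ℝ) (Ebar D H q : ℝ → ℝ),
      0 < tstar → 0 ≤ cstar →
      (∀ t ∈ Set.Icc (0:ℝ) tstar, 0 ≤ Ebar t) →
      (∀ t ∈ Set.Icc (0:ℝ) tstar, 0 ≤ D t) →
      (∀ t ∈ Set.Icc (0:ℝ) tstar, 0 ≤ H t) →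
      (∀ t ∈ Set.Icc (0:ℝ) tstar, 0 ≤ q t) →
      -- differential inequalities
      (∀ t ∈ Set.Icc (0:ℝ) tstar, HasDerivAt Ebar (-(D t)) t) →
      (∀ t ∈ Set.Icc (0:ℝ) tstar, ∃ h' : ℝ, HasDerivAt H h' t ∧
        h' ≤ K * Real.sqrt cstar
            * (Real.sqrt (q t * D t) + (Ebar t) ^ ((3:ℝ)/4) * (D t) ^ ((1:ℝ)/4))) →
      IntervalIntegrable D MeasureTheory.volume 0 tstar →
      -- algebraic inequalities
      (∀ t ∈ Set.Icc (0:ℝ) tstar,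
        Ebar t ≤ K * (Real.sqrt (H t * D t) + cstar ^ 2 * D t)) →
      (∀ t ∈ Set.Icc (0:ℝ) tstar,
        q t ≤ K * (Real.sqrt (H t * Ebar t) + cstar * Ebar t)) →
      -- conclusions
      ∀ t ∈ Set.Icc (0:ℝ) tstar,
        Ebar t ≤ Ebar 0 ∧
        (0 < t → Ebar t ≤ C * (H 0 + cstar ^ 2 * Ebar 0) / t) ∧
        q t ≤ C * Real.sqrt (H 0 + cstar ^ 2 * Ebar 0) * Real.sqrt (Ebar t) ∧
        H t ≤ C * (H 0 + cstar ^ 2 * Ebar 0) := by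
  intro K hK
  obtain ⟨C₁, hC₁def⟩ : ∃ x : ℝ, x = K * Real.sqrt K + K + 1 := ⟨_, rfl⟩
  have hC₁pos : 0 < C₁ := by rw [hC₁def]; positivity
  have hC₁1 : 1 ≤ C₁ := by nlinarith [mul_nonneg hK.le (Real.sqrt_nonneg K)]
  obtain ⟨C₈, hC₈def⟩ : ∃ x : ℝ, x = 8 * K ^ 2 + 4 * K + 2 := ⟨_, rfl⟩
  have hC₈pos : 0 < C₈ := by rw [hC₈def]; positivity
  have hC₈1 : 1 ≤ C₈ := by nlinarith [sq_nonneg K]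
  obtain ⟨y, hydef⟩ : ∃ x : ℝ, x = 36 * K * (2 + 2 * K) * C₈ + 1 := ⟨_, rfl⟩
  have hypos : 0 < y := by nlinarith [mul_pos (mul_pos (by linarith : (0:ℝ) < 36 * K)
    (by linarith : (0:ℝ) < 2 + 2 * K)) hC₈pos]
  obtain ⟨C₆, hC₆def⟩ : ∃ x : ℝ, x = (C₁ + 2) * Real.exp (C₁ * y ^ 4) := ⟨_, rfl⟩
  have hexp1 : 1 ≤ Real.exp (C₁ * y ^ 4) :=
    Real.one_le_exp (mul_nonneg hC₁pos.le (pow_nonneg hypos.le 4))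
  have hC₆3 : 3 ≤ C₆ := by
    nlinarith [mul_le_mul_of_nonneg_left hexp1 (by linarith : (0:ℝ) ≤ C₁ + 2)]
  have hC₆pos : 0 < C₆ := by linarith
  obtain ⟨A, hAdef⟩ : ∃ x : ℝ, x = 4 * C₆ := ⟨_, rfl⟩
  have hA1 : 1 ≤ A := by linarith
  have hApos : 0 < A := by linarith
  refine ⟨(4 * K ^ 2 + 4 * K + 2) * A,
    mul_pos (by nlinarith [sq_nonneg K] : (0:ℝ) < 4 * K ^ 2 + 4 * K + 2) hApos, ?_⟩
  obtain ⟨C, hCdef⟩ : ∃ x : ℝ, x = (4 * K ^ 2 + 4 * K + 2) * A := ⟨_, rfl⟩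
  rw [← hCdef]
  have hA1' : (0:ℝ) ≤ A - 1 := by linarith
  have hCK : K ≤ C := by
    nlinarith [sq_nonneg K, mul_nonneg hK.le hA1', mul_nonneg (sq_nonneg K) hApos.le]
  have hC4K2 : 4 * K ^ 2 ≤ C := by
    nlinarith [mul_nonneg (sq_nonneg K) hA1', mul_nonneg hK.le hApos.le, hApos.le]
  have hC1 : 1 ≤ C := by
    nlinarith [sq_nonneg K, mul_nonneg hK.le hApos.le, mul_nonneg (sq_nonneg K) hApos.le]
  intro tstar cstar Ebar D H q htstar hcstar hE0 hD0 hH0 hq0 hEd hHd0 hDint halg1 halg2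
  have h0mem : (0:ℝ) ∈ Set.Icc (0:ℝ) tstar := ⟨le_refl 0, htstar.le⟩
  obtain ⟨M, hMdef⟩ : ∃ x : ℝ, x = H 0 + cstar ^ 2 * Ebar 0 := ⟨_, rfl⟩
  rw [← hMdef]
  have hH00 : 0 ≤ H 0 := hH0 0 h0mem
  have hE00 : 0 ≤ Ebar 0 := hE0 0 h0mem
  have hM0 : 0 ≤ M := by rw [hMdef]; positivity
  have hH0M : H 0 ≤ M := by nlinarith [mul_nonneg (sq_nonneg cstar) hE00]
  have hcE0M : cstar ^ 2 * Ebar 0 ≤ M := by nlinarith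
  have hanti : AntitoneOn Ebar (Set.Icc 0 tstar) :=
    odeAux_antitoneOn hEd (fun t ht => neg_nonpos.mpr (hD0 t ht))
  have hEleE0 : ∀ t ∈ Set.Icc (0:ℝ) tstar, Ebar t ≤ Ebar 0 :=
    fun t ht => hanti h0mem ht ht.1
  obtain ⟨Hd, hHd⟩ : ∃ Hd : ℝ → ℝ, ∀ t ∈ Set.Icc (0:ℝ) tstar, HasDerivAt H (Hd t) t ∧
      Hd t ≤ K * Real.sqrt cstar *
        (Real.sqrt (q t * D t) + Ebar t ^ ((3:ℝ)/4) * D t ^ ((1:ℝ)/4)) := by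
    have h : ∀ t : ℝ, ∃ d : ℝ, t ∈ Set.Icc (0:ℝ) tstar → (HasDerivAt H d t ∧
        d ≤ K * Real.sqrt cstar *
          (Real.sqrt (q t * D t) + Ebar t ^ ((3:ℝ)/4) * D t ^ ((1:ℝ)/4))) := by
      intro t
      by_cases ht : t ∈ Set.Icc (0:ℝ) tstar
      · obtain ⟨d, hd1, hd2⟩ := hHd0 t ht
        exact ⟨d, fun _ => ⟨hd1, hd2⟩⟩
      · exact ⟨0, fun h => absurd h ht⟩
    choose Hd hd using h
    exact ⟨Hd, fun t ht => hd t ht⟩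
  have hHcont : ContinuousOn H (Set.Icc 0 tstar) :=
    fun s hs => ((hHd s hs).1).continuousAt.continuousWithinAt
  -- decay machine
  have hdecay : ∀ T ∈ Set.Icc (0:ℝ) tstar, ∀ W : ℝ,
      (∀ σ ∈ Set.Icc (0:ℝ) T, 4 * K ^ 2 * H σ + 2 * K * cstar ^ 2 * Ebar σ ≤ W) →
      ∀ s ∈ Set.Icc (0:ℝ) T, s * Ebar s ≤ W := by
    intro T hT W hW s hs
    have hsub : Set.Icc (0:ℝ) T ⊆ Set.Icc (0:ℝ) tstar := Set.Icc_subset_Icc le_rfl hT.2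
    have hsIcc : s ∈ Set.Icc (0:ℝ) tstar := hsub hs
    have hW0 : 0 ≤ W := by
      have h0T : (0:ℝ) ∈ Set.Icc (0:ℝ) T := ⟨le_rfl, hs.1.trans hs.2⟩
      have := hW 0 h0T
      linarith [mul_nonneg (mul_nonneg (by positivity : (0:ℝ) ≤ 2 * K) (sq_nonneg cstar)) hE00,
        mul_nonneg (by positivity : (0:ℝ) ≤ 4 * K ^ 2) hH00]
    rcases (hE0 s hsIcc).eq_or_lt with hEs | hEs
    · rw [← hEs, mul_zero]; exact hW0
    · have hsub2 : Set.Icc (0:ℝ) s ⊆ Set.Icc (0:ℝ) tstar := Set.Icc_subset_Icc le_rfl hsIcc.2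
      have hEposOn : ∀ σ ∈ Set.Icc (0:ℝ) s, 0 < Ebar σ := fun σ hσ =>
        lt_of_lt_of_le hEs (hanti (hsub2 hσ) hsIcc hσ.2)
      have hmono : MonotoneOn (fun σ => W * (Ebar σ)⁻¹ - σ) (Set.Icc 0 s) := by
        apply odeAux_monotoneOn (g := fun σ => W * (-(-(D σ)) / Ebar σ ^ 2) - 1)
        · intro σ hσ
          exact (((hEd σ (hsub2 hσ)).inv (ne_of_gt (hEposOn σ hσ))).const_mul W).sub
            (hasDerivAt_id σ)
        · intro σ hσ
          have hσI : σ ∈ Set.Icc (0:ℝ) tstar := hsub2 hσ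
          have hσT : σ ∈ Set.Icc (0:ℝ) T := ⟨hσ.1, hσ.2.trans hs.2⟩
          have h2 := odeAux_diss_lower hK (hE0 σ hσI) (hD0 σ hσI) (hH0 σ hσI) (halg1 σ hσI)
          have h3 : Ebar σ ^ 2 ≤ W * D σ :=
            h2.trans (mul_le_mul_of_nonneg_right (hW σ hσT) (hD0 σ hσI))
          have h4 : 0 < Ebar σ ^ 2 := pow_pos (hEposOn σ hσ) 2
          have h5 : 1 ≤ W * D σ / Ebar σ ^ 2 := (one_le_div h4).mpr h3
          have h6 : W * (-(-(D σ)) / Ebar σ ^ 2) = W * D σ / Ebar σ ^ 2 := by ring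
          rw [h6]
          linarith
      have h01 : (0:ℝ) ∈ Set.Icc (0:ℝ) s := ⟨le_rfl, hs.1⟩
      have hss : s ∈ Set.Icc (0:ℝ) s := ⟨hs.1, le_rfl⟩
      have hφ := hmono h01 hss hs.1
      dsimp only at hφ
      have hE0pos : 0 < Ebar 0 := hEposOn 0 h01
      have h7 : 0 ≤ W * (Ebar 0)⁻¹ := mul_nonneg hW0 (inv_nonneg.mpr hE0pos.le)
      have h8 : s ≤ W * (Ebar s)⁻¹ := by linarith
      calc s * Ebar s ≤ W * (Ebar s)⁻¹ * Ebar s := mul_le_mul_of_nonneg_right h8 hEs.le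
        _ = W := by field_simp
  -- main facts, by cases
  have main : ∀ t ∈ Set.Icc (0:ℝ) tstar,
      (0 < t → Ebar t ≤ C * M / t) ∧ q t ≤ C * Real.sqrt M * Real.sqrt (Ebar t) ∧
      H t ≤ C * M := by
    by_cases hc0 : cstar = 0
    · -- case cstar = 0
      subst hc0
      have hHder : ∀ s ∈ Set.Icc (0:ℝ) tstar, Hd s ≤ 0 := by
        intro s hs
        have hb := (hHd s hs).2
        rw [Real.sqrt_zero, mul_zero, zero_mul] at hb
        exact hb
      have hHanti := odeAux_antitoneOn (fun s hs => (hHd s hs).1) hHder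
      have hHleM : ∀ s ∈ Set.Icc (0:ℝ) tstar, H s ≤ M := by
        intro s hs
        calc H s ≤ H 0 := hHanti h0mem hs hs.1
          _ ≤ M := hH0M
      intro t ht
      refine ⟨?_, ?_, ?_⟩
      · intro htpos
        have hWh : ∀ σ ∈ Set.Icc (0:ℝ) tstar,
            4 * K ^ 2 * H σ + 2 * K * (0:ℝ) ^ 2 * Ebar σ ≤ 4 * K ^ 2 * M := by
          intro σ hσ
          have h1 := hHleM σ hσ
          have h2 : 0 ≤ 2 * K * (0:ℝ) ^ 2 * Ebar σ := by
            have := hE0 σ hσ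
            nlinarith
          linarith [mul_le_mul_of_nonneg_left h1 (by positivity : (0:ℝ) ≤ 4 * K ^ 2)]
        have hW := hdecay tstar ⟨htstar.le, le_rfl⟩ (4 * K ^ 2 * M) hWh t ht
        rw [le_div_iff₀ htpos]
        linarith [hW, mul_le_mul_of_nonneg_right hC4K2 hM0]
      · have h1 := halg2 t ht
        rw [zero_mul, add_zero] at h1
        have h2 : Real.sqrt (H t * Ebar t) ≤ Real.sqrt M * Real.sqrt (Ebar t) := by
          rw [← Real.sqrt_mul hM0]
          exact Real.sqrt_le_sqrt (mul_le_mul_of_nonneg_right (hHleM t ht) (hE0 t ht))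
        calc q t ≤ K * Real.sqrt (H t * Ebar t) := h1
          _ ≤ K * (Real.sqrt M * Real.sqrt (Ebar t)) := mul_le_mul_of_nonneg_left h2 hK.le
          _ ≤ C * Real.sqrt M * Real.sqrt (Ebar t) := by
              linarith [mul_le_mul_of_nonneg_right hCK
                  (mul_nonneg (Real.sqrt_nonneg M) (Real.sqrt_nonneg (Ebar t)))]
      · calc H t ≤ M := hHleM t ht
          _ ≤ C * M := le_mul_of_one_le_left hM0 hC1
    · -- cstar > 0
      have hcpos : 0 < cstar := lt_of_le_of_ne hcstar (Ne.symm hc0)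
      have hc2pos : 0 < cstar ^ 2 := by positivity
      have hc20 : cstar ^ 2 ≠ 0 := ne_of_gt hc2pos
      by_cases hM00 : M = 0
      · -- degenerate M = 0
        have hsum0 : H 0 + cstar ^ 2 * Ebar 0 = 0 := by rw [← hMdef]; exact hM00
        have hcE0 : cstar ^ 2 * Ebar 0 = 0 :=
          le_antisymm (by linarith) (mul_nonneg (sq_nonneg cstar) hE00)
        have hE00' : Ebar 0 = 0 := by
          rcases mul_eq_zero.mp hcE0 with h | h
          · exact absurd h hc20
          · exact h
        have hEz : ∀ s ∈ Set.Icc (0:ℝ) tstar, Ebar s = 0 := fun s hs =>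
          le_antisymm (by rw [← hE00']; exact hEleE0 s hs) (hE0 s hs)
        have hqz : ∀ s ∈ Set.Icc (0:ℝ) tstar, q s = 0 := by
          intro s hs
          have h1 := halg2 s hs
          rw [hEz s hs] at h1
          simp at h1
          exact le_antisymm h1 (hq0 s hs)
        have hHdz : ∀ s ∈ Set.Icc (0:ℝ) tstar, Hd s ≤ 0 := by
          intro s hs
          have hb := (hHd s hs).2
          rw [hqz s hs, hEz s hs] at hb
          simpa [Real.zero_rpow (by norm_num : ((3:ℝ)/4) ≠ 0)] using hb
        have hHanti := odeAux_antitoneOn (fun s hs => (hHd s hs).1) hHdz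
        have hH00' : H 0 = 0 := le_antisymm (by linarith) hH00
        have hHz : ∀ s ∈ Set.Icc (0:ℝ) tstar, H s ≤ 0 := by
          intro s hs
          calc H s ≤ H 0 := hHanti h0mem hs hs.1
            _ = 0 := hH00'
        intro t ht
        refine ⟨?_, ?_, ?_⟩
        · intro htpos
          rw [hEz t ht, hM00]
          positivity
        · rw [hqz t ht]
          positivity
        · rw [hM00]
          calc H t ≤ 0 := hHz t ht
            _ ≤ C * 0 := by simp
      · -- main case : cstar > 0, M > 0
        have hMpos : 0 < M := lt_of_le_of_ne hM0 (Ne.symm hM00)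
        have hγpos : 0 < Real.sqrt cstar := Real.sqrt_pos.mpr hcpos
        have hγ2 : Real.sqrt cstar ^ 2 = cstar := Real.sq_sqrt hcstar
        have hc2EM : ∀ s ∈ Set.Icc (0:ℝ) tstar, cstar ^ 2 * Ebar s ≤ M := by
          intro s hs
          linarith [mul_le_mul_of_nonneg_left (hEleE0 s hs) hc2pos.le, hcE0M]
        -- pointwise head bound
        have hclaim1 : ∀ s ∈ Set.Icc (0:ℝ) tstar,
            Hd s ≤ C₁ * (H s / cstar ^ 2 + Ebar s + cstar ^ 2 * D s) := by
          intro s hs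
          have h := odeAux_head_bound hK hcpos (hE0 s hs) (hD0 s hs) (hH0 s hs) (hq0 s hs)
            (halg2 s hs) ((hHd s hs).2)
          rw [← hC₁def] at h
          exact h
        -- head Gronwall estimate : H ≤ C₆ M up to time y⁴cstar²
        have hhead : ∀ s ∈ Set.Icc (0:ℝ) tstar, s ≤ y ^ 4 * cstar ^ 2 → H s ≤ C₆ * M := by
          obtain ⟨a, hadef⟩ : ∃ x : ℝ, x = C₁ / cstar ^ 2 := ⟨_, rfl⟩
          have hapos : 0 < a := by rw [hadef]; exact div_pos hC₁pos hc2pos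
          have hGanti : AntitoneOn
              (fun s => (H s + C₁ * cstar ^ 2 * Ebar s + M) * Real.exp (-(a * s)))
              (Set.Icc 0 tstar) := by
            apply odeAux_antitoneOn (g := fun s =>
              (Hd s + C₁ * cstar ^ 2 * -(D s)) * Real.exp (-(a * s)) +
              (H s + C₁ * cstar ^ 2 * Ebar s + M) * (Real.exp (-(a * s)) * -(a * 1)))
            · intro s hs
              have h1 : HasDerivAt (fun s => H s + C₁ * cstar ^ 2 * Ebar s + M)
                  (Hd s + C₁ * cstar ^ 2 * -(D s)) s :=
                (((hHd s hs).1).add ((hEd s hs).const_mul (C₁ * cstar ^ 2))).add_const M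
              have h2 : HasDerivAt (fun s => Real.exp (-(a * s)))
                  (Real.exp (-(a * s)) * -(a * 1)) s :=
                (((hasDerivAt_id s).const_mul a).neg).exp
              exact h1.mul h2
            · intro s hs
              have hexp : 0 < Real.exp (-(a * s)) := Real.exp_pos _
              have hb := hclaim1 s hs
              have hEM : Ebar s ≤ M / cstar ^ 2 := by
                rw [le_div_iff₀ hc2pos]
                linarith [hc2EM s hs]
              have hkey : Hd s + C₁ * cstar ^ 2 * -(D s)
                  ≤ a * (H s + C₁ * cstar ^ 2 * Ebar s + M) := by
                have e1 : a * (H s + C₁ * cstar ^ 2 * Ebar s + M)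
                    = C₁ * (H s / cstar ^ 2) + C₁ * C₁ * Ebar s + C₁ * (M / cstar ^ 2) := by
                  rw [hadef]
                  field_simp
                rw [e1]
                have h3 : C₁ * Ebar s ≤ C₁ * (M / cstar ^ 2) :=
                  mul_le_mul_of_nonneg_left hEM hC₁pos.le
                have h4 : 0 ≤ C₁ * C₁ * Ebar s :=
                  mul_nonneg (mul_nonneg hC₁pos.le hC₁pos.le) (hE0 s hs)
                linarith [hb, h3, h4]
              calc (Hd s + C₁ * cstar ^ 2 * -(D s)) * Real.exp (-(a * s)) +
                  (H s + C₁ * cstar ^ 2 * Ebar s + M) * (Real.exp (-(a * s)) * -(a * 1))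
                  = (Hd s + C₁ * cstar ^ 2 * -(D s)
                      - a * (H s + C₁ * cstar ^ 2 * Ebar s + M)) * Real.exp (-(a * s)) := by
                    ring
                _ ≤ 0 := mul_nonpos_of_nonpos_of_nonneg (by linarith) hexp.le
          intro s hs hsy
          have hG := hGanti h0mem hs hs.1
          dsimp only at hG
          rw [show -(a * 0) = 0 by ring, Real.exp_zero, mul_one] at hG
          have hG0 : H 0 + C₁ * cstar ^ 2 * Ebar 0 + M ≤ (C₁ + 2) * M := by
            linarith [mul_le_mul_of_nonneg_left hcE0M hC₁pos.le, hH0M]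
          have h9 : (H s + C₁ * cstar ^ 2 * Ebar s + M) * Real.exp (-(a * s)) ≤ (C₁ + 2) * M :=
            hG.trans hG0
          have h10 := mul_le_mul_of_nonneg_right h9 (Real.exp_pos (a * s)).le
          rw [mul_assoc, ← Real.exp_add, neg_add_cancel, Real.exp_zero, mul_one] at h10
          have hexps : Real.exp (a * s) ≤ Real.exp (C₁ * y ^ 4) := by
            rw [Real.exp_le_exp, hadef, div_mul_eq_mul_div, div_le_iff₀ hc2pos]
            linarith [mul_le_mul_of_nonneg_left hsy hC₁pos.le]
          have h11 : 0 ≤ C₁ * cstar ^ 2 * Ebar s :=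
            mul_nonneg (mul_nonneg hC₁pos.le hc2pos.le) (hE0 s hs)
          have h12 : (C₁ + 2) * M * Real.exp (a * s) ≤ (C₁ + 2) * M * Real.exp (C₁ * y ^ 4) :=
            mul_le_mul_of_nonneg_left hexps (mul_nonneg (by linarith) hM0)
          have hC₆M : C₆ * M = (C₁ + 2) * M * Real.exp (C₁ * y ^ 4) := by
            rw [hC₆def]; ring
          linarith [hM0]
        -- tail quantities
        obtain ⟨N, hNdef⟩ : ∃ x : ℝ, x = C₈ * (A * M) := ⟨_, rfl⟩
        have hNpos : 0 < N := by
          rw [hNdef]; exact mul_pos hC₈pos (mul_pos hApos hMpos)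
        obtain ⟨n, hndef⟩ : ∃ x : ℝ, x = Real.sqrt (Real.sqrt N) := ⟨_, rfl⟩
        have hnpos : 0 < n := by rw [hndef]; exact Real.sqrt_pos.mpr (Real.sqrt_pos.mpr hNpos)
        have hn2 : n ^ 2 = Real.sqrt N := by
          rw [hndef]; exact Real.sq_sqrt (Real.sqrt_nonneg N)
        have hn4 : n ^ 4 = N := by
          rw [show n ^ 4 = (n ^ 2) ^ 2 by ring, hn2, Real.sq_sqrt hNpos.le]
        obtain ⟨J, hJdef⟩ : ∃ x : ℝ, x = 2 * K * (C₈ * (A * M)) := ⟨_, rfl⟩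
        have hJpos : 0 < J := by
          rw [hJdef]; positivity
        obtain ⟨j, hjdef⟩ : ∃ x : ℝ, x = Real.sqrt J := ⟨_, rfl⟩
        have hj2 : j ^ 2 = J := by rw [hjdef]; exact Real.sq_sqrt hJpos.le
        have hAM0 : 0 ≤ A * M := (mul_pos hApos hMpos).le
        have hj0 : 0 ≤ j := by rw [hjdef]; exact Real.sqrt_nonneg J
        have himp := odeAux_improve (q := q) hK hcpos hMpos hApos hA1 hC₈def hypos hnpos hn4
          hj0 hj2 hNdef hJdef (by linarith only [hydef]) hAdef hE0 hD0 hq0 hEd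
          (fun t ht => (hHd t ht).1) (fun t ht => (hHd t ht).2)
          halg2 hc2EM hdecay hhead
        -- bootstrap via continuity
        have hboot : ∀ t ∈ Set.Icc (0:ℝ) tstar, H t ≤ A * M := by
          by_contra hcon
          push_neg at hcon
          obtain ⟨t₀, ht₀, hgt⟩ := hcon
          set B := {t : ℝ | t ∈ Set.Icc (0:ℝ) tstar ∧ A * M < H t} with hBdef
          have hBne : B.Nonempty := ⟨t₀, by rw [hBdef]; exact ⟨ht₀, hgt⟩⟩
          have hBbd : BddBelow B := by
            rw [hBdef]; exact ⟨0, fun x hx => hx.1.1⟩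
          set T₀ := sInf B with hT₀def
          have hclosed : IsClosed {t : ℝ | t ∈ Set.Icc (0:ℝ) tstar ∧ A * M ≤ H t} :=
            hHcont.preimage_isClosed_of_isClosed isClosed_Icc (isClosed_Ici (a := A * M))
          have hT₀cl : T₀ ∈ closure B := csInf_mem_closure hBne hBbd
          have hT₀mem : T₀ ∈ {t : ℝ | t ∈ Set.Icc (0:ℝ) tstar ∧ A * M ≤ H t} := by
            have hsub : B ⊆ {t : ℝ | t ∈ Set.Icc (0:ℝ) tstar ∧ A * M ≤ H t} :=
              fun x hx => ⟨hx.1, hx.2.le⟩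
            exact hclosed.closure_subset ((closure_mono hsub) hT₀cl)
          obtain ⟨hT₀I, hT₀ge⟩ := hT₀mem
          have hbelow : ∀ s ∈ Set.Icc (0:ℝ) T₀, H s ≤ A * M := by
            intro s hs
            rcases lt_or_eq_of_le hs.2 with hlt | heq
            · by_contra hgt'
              push_neg at hgt'
              have hsB : s ∈ B := ⟨⟨hs.1, hs.2.trans hT₀I.2⟩, hgt'⟩
              exact absurd (csInf_le hBbd hsB) (not_le.mpr hlt)
            · rw [heq]
              rcases eq_or_lt_of_le hT₀I.1 with h0 | h0
              · rw [← h0]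
                calc H 0 ≤ M := hH0M
                  _ ≤ A * M := le_mul_of_one_le_left hM0 hA1
              · have hclosed2 : IsClosed {t : ℝ | t ∈ Set.Icc (0:ℝ) tstar ∧ H t ≤ A * M} :=
                  hHcont.preimage_isClosed_of_isClosed isClosed_Icc (isClosed_Iic (a := A * M))
                have hsub2 : Set.Ico (0:ℝ) T₀ ⊆
                    {t : ℝ | t ∈ Set.Icc (0:ℝ) tstar ∧ H t ≤ A * M} := by
                  intro x hx
                  have hxI : x ∈ Set.Icc (0:ℝ) tstar := ⟨hx.1, hx.2.le.trans hT₀I.2⟩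
                  refine ⟨hxI, ?_⟩
                  by_contra hgt'
                  push_neg at hgt'
                  exact absurd (csInf_le hBbd ⟨hxI, hgt'⟩) (not_le.mpr hx.2)
                have hT₀cl2 : T₀ ∈ closure (Set.Ico (0:ℝ) T₀) := by
                  rw [closure_Ico (ne_of_lt h0)]
                  exact ⟨h0.le, le_rfl⟩
                exact (hclosed2.closure_subset ((closure_mono hsub2) hT₀cl2)).2
          have himpT := himp T₀ hT₀I hbelow
          linarith [himpT, hT₀ge, mul_pos hApos hMpos]
        -- conclusions in the main case
        intro t ht
        have hACM : A * M ≤ C * M := by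
          apply mul_le_mul_of_nonneg_right _ hM0
          rw [hCdef]
          linarith [mul_nonneg (sq_nonneg K) hApos.le, mul_nonneg hK.le hApos.le, hApos.le]
        refine ⟨?_, ?_, (hboot t ht).trans hACM⟩
        · intro htpos
          have hWfin : ∀ σ ∈ Set.Icc (0:ℝ) tstar,
              4 * K ^ 2 * H σ + 2 * K * cstar ^ 2 * Ebar σ
                ≤ 4 * K ^ 2 * (A * M) + 2 * K * M := by
            intro σ hσ
            linarith [mul_le_mul_of_nonneg_left (hboot σ hσ)
              (by positivity : (0:ℝ) ≤ 4 * K ^ 2),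
              mul_le_mul_of_nonneg_left (hc2EM σ hσ) (by linarith : (0:ℝ) ≤ 2 * K)]
          have hdec := hdecay tstar ⟨htstar.le, le_rfl⟩ _ hWfin t ht
          rw [le_div_iff₀ htpos]
          have hWC : 4 * K ^ 2 * (A * M) + 2 * K * M ≤ C * M := by
            rw [hCdef]
            linarith [mul_nonneg (mul_nonneg hK.le hM0) hA1', hM0,
              mul_nonneg hM0 hA1', mul_nonneg hK.le hM0,
              mul_nonneg (mul_nonneg hK.le hApos.le) hM0, mul_nonneg hApos.le hM0,
              mul_nonneg (mul_nonneg (mul_nonneg hK.le hK.le) hM0) hA1']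
          linarith [hdec, hWC]
        · have h1 := halg2 t ht
          have hEt := hE0 t ht
          have h2 : Real.sqrt (H t * Ebar t) ≤ Real.sqrt A * Real.sqrt M * Real.sqrt (Ebar t) := by
            rw [show Real.sqrt A * Real.sqrt M = Real.sqrt (A * M) from
              (Real.sqrt_mul hApos.le M).symm, ← Real.sqrt_mul hAM0]
            exact Real.sqrt_le_sqrt (mul_le_mul_of_nonneg_right (hboot t ht) hEt)
          have h3 : cstar * Ebar t ≤ Real.sqrt M * Real.sqrt (Ebar t) := by
            rw [← Real.sqrt_mul hM0]
            rw [show cstar * Ebar t = Real.sqrt ((cstar * Ebar t) ^ 2) from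
              (Real.sqrt_sq (mul_nonneg hcstar hEt)).symm]
            apply Real.sqrt_le_sqrt
            have h4 : cstar ^ 2 * Ebar t * Ebar t ≤ M * Ebar t :=
              mul_le_mul_of_nonneg_right (hc2EM t ht) hEt
            linarith [h4]
          have h5 : Real.sqrt A ≤ A := by
            calc Real.sqrt A ≤ Real.sqrt (A ^ 2) := Real.sqrt_le_sqrt (by
                  linarith [mul_nonneg hApos.le hA1', sq_nonneg A,
                    (show A ^ 2 = A * A by ring) ▸ le_refl (A^2)])
              _ = A := Real.sqrt_sq hApos.le
          have h6 : K * (A + 1) ≤ C := by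
            rw [hCdef]
            linarith [mul_nonneg hK.le hA1', mul_nonneg (mul_nonneg hK.le hK.le) hApos.le,
              hApos.le, mul_nonneg hK.le hApos.le, mul_nonneg (sq_nonneg K) hApos.le]
          have hsE := Real.sqrt_nonneg (Ebar t)
          have hsM := Real.sqrt_nonneg M
          have hsA := Real.sqrt_nonneg A
          calc q t ≤ K * (Real.sqrt (H t * Ebar t) + cstar * Ebar t) := h1
            _ ≤ K * (Real.sqrt A * Real.sqrt M * Real.sqrt (Ebar t)
                + Real.sqrt M * Real.sqrt (Ebar t)) := by
                apply mul_le_mul_of_nonneg_left _ hK.le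
                linarith [h2, h3]
            _ ≤ C * Real.sqrt M * Real.sqrt (Ebar t) := by
                linarith [mul_le_mul_of_nonneg_right h6 (mul_nonneg hsM hsE),
                  mul_le_mul_of_nonneg_left (mul_le_mul_of_nonneg_right
                    (mul_le_mul_of_nonneg_right h5 hsM) hsE) hK.le]
  intro t ht
  exact ⟨hEleE0 t ht, (main t ht).1, (main t ht).2.1, (main t ht).2.2⟩
end
end

section
/- Metastability under weak norm condition: Let (X₀, ‖·‖₀) be a Banach space and (X₁, ‖·‖₁) a Hilbert space with X₁ ⊆ X₀ and ‖w‖₀ ≤ ‖w‖₁ for all w ∈ X₁. Let E : X₁ → ℝ be differentiable with gradient ∇E, let u : [0,T] → X₁ be a solution of the gradient flow u'(t) = −∇E(u(t)), let M ⊆ X₁ and N ⊆ X₁, and suppose: (i) u(t) ∈ M for all t ∈ [0,T] and v : [0,T] → N satisfies (1/2)‖u(t) − v(t)‖₀² ≤ E(u(t)) − E(v(t)) ≤ (1/2)‖∇E(u(t))‖₁² for all t; (ii) there is δ ∈ (0,1) such that |E(v₁) − E(v₂)| ≤ δ‖v₁ − v₂‖₀ for all v₁, v₂ ∈ N; and (iii)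 t ↦ E(v(t)) is integrable on [0,T]. Then for every ε ∈ (0,1) there is a constant C_ε such that for all t ∈ [0,T]: ‖u(t) − v(t)‖₀² + E(u(t)) − E(v(t)) ≤ C_ε[exp(−(2−ε)t)(E(u(0)) − E(v(0))) + δ²]. Furthermore, there is a universal constant C such that for all 0 < s < t ≤ T: ‖u(t) − u(s)‖₁ ≤ C[(E(u(s)) − E(v(s)))^{1/2} + δ(t − s + 1)]. -/
noncomputable section

open Set

section AuxMeta

lemma aux_amgm {x c d : ℝ} (hx : 0 ≤ x) (hc : 0 < c) (hd : 0 ≤ d) :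
    d * Real.sqrt x ≤ c * x + d^2/(4*c) := by
  obtain ⟨s, hs, rfl⟩ : ∃ s : ℝ, 0 ≤ s ∧ s^2 = x :=
    ⟨Real.sqrt x, Real.sqrt_nonneg x, Real.sq_sqrt hx⟩
  rw [Real.sqrt_sq hs]
  have key : d * s * (4*c) ≤ (c * s^2 + d^2/(4*c)) * (4*c) := by
    rw [add_mul, div_mul_cancel₀ _ (by positivity : (4*c) ≠ 0)]
    nlinarith [sq_nonneg (d - 2*c*s)]
  exact le_of_mul_le_mul_right key (by positivity)

lemma aux_sqrt_add_le (x y : ℝ) (hx : 0 ≤ x) (hy : 0 ≤ y) :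
    Real.sqrt (x+y) ≤ Real.sqrt x + Real.sqrt y := by
  rw [show Real.sqrt x + Real.sqrt y = Real.sqrt ((Real.sqrt x + Real.sqrt y)^2) by
    rw [Real.sqrt_sq (by positivity)]]
  apply Real.sqrt_le_sqrt
  nlinarith [Real.sq_sqrt hx, Real.sq_sqrt hy, Real.sqrt_nonneg x, Real.sqrt_nonneg y]

lemma aux_le_sqrt {x y : ℝ} (hx : 0 ≤ x) (h : x^2 ≤ y) : x ≤ Real.sqrt y := by
  rw [show x = Real.sqrt (x^2) by rw [Real.sqrt_sq hx]]
  exact Real.sqrt_le_sqrt h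

lemma aux_antitoneOn_Icc {g g' : ℝ → ℝ} {s t : ℝ}
    (hg : ∀ r ∈ Icc s t, HasDerivAt g (g' r) r)
    (h0 : ∀ r ∈ Icc s t, g' r ≤ 0) : AntitoneOn g (Icc s t) := by
  apply antitoneOn_of_deriv_nonpos (convex_Icc s t)
  · exact fun r hr => (hg r hr).continuousAt.continuousWithinAt
  · intro r hr
    rw [interior_Icc] at hr
    exact ((hg r (Ioo_subset_Icc_self hr)).differentiableAt).differentiableWithinAt
  · intro r hr
    rw [interior_Icc] at hr
    rw [(hg r (Ioo_subset_Icc_self hr)).deriv]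
    exact h0 r (Ioo_subset_Icc_self hr)

lemma aux_exp_decay {g g' : ℝ → ℝ} {s t lam c : ℝ} (hst : s ≤ t)
    (hg : ∀ r ∈ Icc s t, HasDerivAt g (g' r) r)
    (hineq : ∀ r ∈ Icc s t, g' r ≤ -lam * (g r - c)) :
    g t - c ≤ Real.exp (-lam * (t - s)) * (g s - c) := by
  set F : ℝ → ℝ := fun r => Real.exp (lam * r) * (g r - c) with hF
  have hF' : ∀ r ∈ Icc s t, HasDerivAt F (Real.exp (lam * r) * (lam * (g r - c) + g' r)) r := by
    intro r hr
    have h1 : HasDerivAt (fun r => Real.exp (lam * r)) (Real.exp (lam * r) * lam) r := by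
      exact (Real.hasDerivAt_exp (lam * r)).comp r (((hasDerivAt_id' r).const_mul lam).congr_deriv (mul_one lam))
    have h2 : HasDerivAt (fun r => g r - c) (g' r) r := (hg r hr).sub_const c
    have := h1.mul h2
    refine this.congr_deriv ?_
    ring
  have hanti : AntitoneOn F (Icc s t) := by
    apply aux_antitoneOn_Icc hF'
    intro r hr
    have := hineq r hr
    have he : 0 < Real.exp (lam * r) := Real.exp_pos _
    nlinarith
  have hFt : F t ≤ F s := hanti (left_mem_Icc.2 hst) (right_mem_Icc.2 hst) hst
  have he : 0 < Real.exp (lam * t) := Real.exp_pos _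
  simp only [hF] at hFt
  have hkey : Real.exp (lam * t) * (g t - c)
      ≤ Real.exp (lam * t) * (Real.exp (-lam * (t - s)) * (g s - c)) := by
    have : Real.exp (lam * t) * (Real.exp (-lam * (t - s)) * (g s - c))
        = Real.exp (lam * s) * (g s - c) := by
      rw [← mul_assoc, ← Real.exp_add]; ring_nf
    rw [this]; exact hFt
  exact le_of_mul_le_mul_left hkey he

section Banach
variable {X : Type*} [NormedAddCommGroup X] [NormedSpace ℝ X]

lemma aux_norm_sub_le {u : ℝ → X} {u' : ℝ → X} {g g' : ℝ → ℝ} {s t lam : ℝ}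
    (hst : s ≤ t) (hlam : 0 < lam)
    (hu : ∀ r ∈ Icc s t, HasDerivAt u (u' r) r)
    (hg : ∀ r ∈ Icc s t, HasDerivAt g (g' r) r)
    (hb : ∀ r ∈ Icc s t, ‖u' r‖^2 ≤ -g' r) :
    ‖u t - u s‖ ≤ (lam * (t - s) + (g s - g t)/lam)/2 := by
  set B : ℝ → ℝ := fun r => (lam * (r - s) + (g s - g r)/lam)/2 with hBdef
  have hB' : ∀ r ∈ Icc s t, HasDerivAt B ((lam - g' r / lam)/2) r := by
    intro r hr
    have h2 : HasDerivAt (fun r : ℝ => g s - g r) (-g' r) r := by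
      exact ((hasDerivAt_const r (g s)).sub (hg r hr)).congr_deriv (zero_sub _)
    have h1 : HasDerivAt (fun r : ℝ => lam * (r - s)) lam r := by
      simpa using ((hasDerivAt_id r).sub_const s).const_mul lam
    have := (h1.add (h2.div_const lam)).div_const 2
    refine this.congr_deriv ?_
    ring
  have c1 : ContinuousOn (fun r => u r - u s) (Icc s t) :=
    fun r hr => ((hu r hr).sub_const (u s)).continuousAt.continuousWithinAt
  have c2 : ∀ r ∈ Ico s t, HasDerivWithinAt (fun r => u r - u s) (u' r) (Ici r) r :=
    fun r hr => ((hu r (Ico_subset_Icc_self hr)).sub_const (u s)).hasDerivWithinAt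
  have c3 : ‖u s - u s‖ ≤ B s := by simp [hBdef]
  have c4 : ContinuousOn B (Icc s t) :=
    fun r hr => (hB' r hr).continuousAt.continuousWithinAt
  have c5 : ∀ r ∈ Ico s t, HasDerivWithinAt B ((lam - g' r / lam)/2) (Ici r) r :=
    fun r hr => (hB' r (Ico_subset_Icc_self hr)).hasDerivWithinAt
  have c6 : ∀ r ∈ Ico s t, ‖u' r‖ ≤ (lam - g' r / lam)/2 := by
    intro r hr
    have hbr := hb r (Ico_subset_Icc_self hr)
    have h1 : ‖u' r‖ * (2 * lam) ≤ (lam - g' r / lam)/2 * (2 * lam) := by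
      have he : (lam - g' r / lam)/2 * (2 * lam) = lam^2 - g' r := by
        field_simp
      rw [he]
      nlinarith [sq_nonneg (lam - ‖u' r‖), norm_nonneg (u' r)]
    exact le_of_mul_le_mul_right h1 (by positivity)
  have key := image_norm_le_of_norm_deriv_right_le_deriv_boundary' c1 c2 c3 c4 c5 c6
    (right_mem_Icc.2 hst)
  simpa [hBdef] using key

lemma aux_norm_sub_sq_le {u : ℝ → X} {u' : ℝ → X} {g g' : ℝ → ℝ} {s t : ℝ}
    (hst : s ≤ t)
    (hu : ∀ r ∈ Icc s t, HasDerivAt u (u' r) r)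
    (hg : ∀ r ∈ Icc s t, HasDerivAt g (g' r) r)
    (hb : ∀ r ∈ Icc s t, ‖u' r‖^2 ≤ -g' r) :
    ‖u t - u s‖^2 ≤ (t - s) * (g s - g t) := by
  rcases eq_or_lt_of_le hst with rfl | hlt
  · simp
  have hD : 0 ≤ g s - g t := by
    have := aux_antitoneOn_Icc hg (fun r hr => by nlinarith [hb r hr, sq_nonneg ‖u' r‖])
    have h := this (left_mem_Icc.2 hst) (right_mem_Icc.2 hst) hst
    linarith
  set D := g s - g t with hDdef
  set Δ := t - s with hΔ
  have hΔpos : 0 < Δ := by simp only [hΔ]; linarith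
  have key : ∀ η > (0:ℝ), ‖u t - u s‖^2 ≤ Δ * D + Δ * η := by
    intro η hη
    set lam := Real.sqrt ((D + η)/Δ) with hlamdef
    have hlam : 0 < lam := Real.sqrt_pos.2 (by positivity)
    have h1 := aux_norm_sub_le hst hlam hu hg hb
    have hsq : lam^2 = (D + η)/Δ := Real.sq_sqrt (by positivity)
    have h2 : (lam * Δ + D/lam)/2 ≤ lam * Δ := by
      rw [div_le_iff₀ (by norm_num : (0:ℝ) < 2)]
      have h5 : D / lam ≤ lam * Δ := by
        rw [div_le_iff₀ hlam, mul_assoc, mul_comm Δ lam, ← mul_assoc]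
        have h6 : lam * lam * Δ = D + η := by
          have h7 : lam * lam = lam ^2 := by ring
          rw [h7, hsq]; field_simp
        rw [h6]; linarith
      linarith
    have h3 : ‖u t - u s‖ ≤ lam * Δ := by
      refine le_trans h1 (le_trans (le_of_eq ?_) h2)
      simp only [hΔ, hDdef]
    have h4 : ‖u t - u s‖^2 ≤ (lam * Δ)^2 := by
      have := norm_nonneg (u t - u s)
      nlinarith
    calc ‖u t - u s‖^2 ≤ (lam * Δ)^2 := h4
      _ = lam^2 * Δ^2 := by ring
      _ = Δ * D + Δ * η := by rw [hsq]; field_simp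
  by_contra hcon
  push_neg at hcon
  have hη : 0 < (‖u t - u s‖^2 - Δ * D)/(2*Δ) := by
    apply div_pos (by linarith) (by linarith)
  have hk := key _ hη
  have heq : Δ * ((‖u t - u s‖^2 - Δ * D)/(2*Δ)) = (‖u t - u s‖^2 - Δ * D)/2 := by
    field_simp
  rw [heq] at hk
  nlinarith [hk, hcon]

end Banach

lemma aux_exp_two_bounds : (4:ℝ) ≤ Real.exp 2 ∧ Real.exp 2 ≤ 8 := by
  have e1 : Real.exp 1 < 2.7182818286 := Real.exp_one_lt_d9
  have e2 : (2.7182818283:ℝ) < Real.exp 1 := Real.exp_one_gt_d9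
  have h : Real.exp 2 = Real.exp 1 * Real.exp 1 := by
    rw [← Real.exp_add]; norm_num
  constructor <;> rw [h] <;> nlinarith

lemma aux_rate {ε : ℝ} (h0 : 0 < ε) (h1 : ε < 1) :
    Real.exp (-(2/(1+ε/400))*1) + 4*(ε/400) ≤ (1-(ε/400)) * Real.exp (-(2-ε)) := by
  have hε'0 : 0 < ε/400 := by positivity
  have hε'lt : ε/400 < 1/400 := by linarith
  have he2 := aux_exp_two_bounds
  have hE2a : Real.exp (-2) ≤ 1/4 := by
    rw [Real.exp_neg, inv_le_comm₀ (by positivity) (by norm_num)]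
    linarith [he2.1]
  have hE2b : (1:ℝ)/8 ≤ Real.exp (-2) := by
    rw [Real.exp_neg, le_inv_comm₀ (by norm_num) (by positivity)]
    linarith [he2.2]
  have h2e : (0:ℝ) < 1 - 2*(ε/400) := by linarith
  have step1 : Real.exp (-(2/(1+ε/400))*1) ≤ Real.exp (-2) / (1-2*(ε/400)) := by
    have h1p : (0:ℝ) < 1+ε/400 := by linarith
    have harg : -(2/(1+ε/400))*1 ≤ 2*(ε/400) - 2 := by
      rw [mul_one, ← neg_div, div_le_iff₀ h1p]
      nlinarith [sq_nonneg (ε/400)]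
    calc Real.exp (-(2/(1+ε/400))*1) ≤ Real.exp (2*(ε/400) - 2) := Real.exp_le_exp.2 harg
      _ = Real.exp (2*(ε/400)) * Real.exp (-2) := by rw [← Real.exp_add]; ring_nf
      _ ≤ (1-2*(ε/400))⁻¹ * Real.exp (-2) := by
          apply mul_le_mul_of_nonneg_right _ (Real.exp_nonneg _)
          have hle : 1 - 2*(ε/400) ≤ Real.exp (-(2*(ε/400))) := by
            have := Real.add_one_le_exp (-(2*(ε/400))); linarith
          rw [show Real.exp (2*(ε/400)) = (Real.exp (-(2*(ε/400))))⁻¹ by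
            rw [← Real.exp_neg]; ring_nf]
          exact inv_anti₀ h2e hle
      _ = Real.exp (-2) / (1-2*(ε/400)) := by rw [div_eq_mul_inv]; ring
  have step3 : (1+ε) * Real.exp (-2) ≤ Real.exp (-(2-ε)) := by
    have hh : Real.exp (-(2-ε)) = Real.exp ε * Real.exp (-2) := by rw [← Real.exp_add]; ring_nf
    rw [hh]
    apply mul_le_mul_of_nonneg_right _ (Real.exp_nonneg _)
    have := Real.add_one_le_exp ε; linarith
  have key : Real.exp (-2)/(1-2*(ε/400)) + 4*(ε/400) ≤ (1-(ε/400))*((1+ε)*Real.exp (-2)) := by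
    rw [div_add' _ _ _ (ne_of_gt h2e), div_le_iff₀ h2e]
    nlinarith [hE2a, hE2b, hε'0, hε'lt, mul_le_mul_of_nonneg_right hE2b hε'0.le,
      mul_nonneg hε'0.le hε'0.le, mul_nonneg (mul_nonneg hε'0.le hε'0.le) hε'0.le,
      mul_lt_mul_of_pos_left hε'lt hε'0,
      mul_le_mul_of_nonneg_left hE2b (mul_nonneg hε'0.le hε'0.le)]
  calc Real.exp (-(2/(1+ε/400))*1) + 4*(ε/400)
      ≤ Real.exp (-2)/(1-2*(ε/400)) + 4*(ε/400) := by linarith [step1]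
    _ ≤ (1-(ε/400))*((1+ε)*Real.exp (-2)) := key
    _ ≤ (1-(ε/400))*Real.exp (-(2-ε)) := by
        apply mul_le_mul_of_nonneg_left step3 (by linarith)

lemma aux_geom (m : ℕ) : ∑ k ∈ Finset.range m, (Real.exp (-(3/4)))^k ≤ 3 := by
  set r := Real.exp (-(3/4:ℝ)) with hrdef
  have hr0 : 0 ≤ r := Real.exp_nonneg _
  have hr1 : r ≤ 4/7 := by
    have h2 : (7:ℝ)/4 ≤ Real.exp (3/4) := by
      have := Real.add_one_le_exp (3/4:ℝ); linarith
    rw [hrdef, Real.exp_neg]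
    calc (Real.exp (3/4:ℝ))⁻¹ ≤ ((7:ℝ)/4)⁻¹ := inv_anti₀ (by norm_num) h2
      _ = 4/7 := by norm_num
  have h := geom_sum_mul r m
  have hS0 : 0 ≤ ∑ k ∈ Finset.range m, r^k :=
    Finset.sum_nonneg (fun k _ => pow_nonneg hr0 k)
  have hrm : 0 ≤ r^m := pow_nonneg hr0 m
  nlinarith [h, hS0, hrm, hr1]

end AuxMeta

set_option maxHeartbeats 1000000

/-- abstract metastability under the weak norm condition, assuming
integrability of `t ↦ E(v(t))`: exponential decay `‖u−v‖₀² + ℰ ≲_ε e^{-(2-ε)t}ℰ₀ + δ²`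
and slow motion `‖u(t) − u(s)‖₁ ≲ ℰ(s)^{1/2} + δ(t − s + 1)`. -/
theorem abstract_metastability_weak_norm :
    ∃ C : ℝ, 0 < C ∧
    ∀ ε : ℝ, 0 < ε → ε < 1 →
    ∃ Cε : ℝ, 0 < Cε ∧
    ∀ (X₀ : Type*) [NormedAddCommGroup X₀] [NormedSpace ℝ X₀] [CompleteSpace X₀]
      (X₁ : Type*) [NormedAddCommGroup X₁] [InnerProductSpace ℝ X₁] [CompleteSpace X₁]
      (j : X₁ →ₗ[ℝ] X₀), (∀ w : X₁, ‖j w‖ ≤ ‖w‖) →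
    ∀ E : X₁ → ℝ, Differentiable ℝ E →
    ∀ T : ℝ, 0 ≤ T →
    ∀ (u v : ℝ → X₁) (M N : Set X₁),
      (∀ t ∈ Set.Icc (0:ℝ) T, HasDerivAt u (-(gradient E (u t))) t) →
      (∀ t ∈ Set.Icc (0:ℝ) T, u t ∈ M) →
      (∀ t ∈ Set.Icc (0:ℝ) T, v t ∈ N) →
      -- (i) energy–energy–dissipation
      (∀ t ∈ Set.Icc (0:ℝ) T,
        ((1:ℝ)/2) * ‖j (u t - v t)‖ ^ 2 ≤ E (u t) - E (v t) ∧
        E (u t) - E (v t) ≤ ((1:ℝ)/2) * ‖gradient E (u t)‖ ^ 2) →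
    ∀ δ : ℝ, 0 < δ → δ < 1 →
      -- (ii) Lipschitz condition on the slow manifold
      (∀ v₁ ∈ N, ∀ v₂ ∈ N, |E v₁ - E v₂| ≤ δ * ‖j (v₁ - v₂)‖) →
      -- (iii) integrability of the energy along the slow manifold
      IntervalIntegrable (fun t => E (v t)) MeasureTheory.volume 0 T →
      -- conclusion: exponential decay ...
      (∀ t ∈ Set.Icc (0:ℝ) T,
        ‖j (u t - v t)‖ ^ 2 + (E (u t) - E (v t))
          ≤ Cε * (Real.exp (-((2 - ε) * t)) * (E (u 0) - E (v 0)) + δ ^ 2)) ∧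
      -- ... and slow motion
      (∀ s t : ℝ, 0 < s → s < t → t ≤ T →
        ‖u t - u s‖ ≤ C * (Real.sqrt (E (u s) - E (v s)) + δ * (t - s + 1))) := by
  refine ⟨100000, by norm_num, ?_⟩
  intro ε hε0 hε1
  refine ⟨10^6/ε, by positivity, ?_⟩
  intro X₀ _i1 _i2 _i3 X₁ _i4 _i5 _i6 j hj E hE T hT u v M N hu hM hN hi δ hδ0 hδ1 hLip hInt
  clear hM hInt
  -- basic facts
  have hEnn : ∀ r ∈ Icc (0:ℝ) T, 0 ≤ E (u r) - E (v r) := by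
    intro r hr
    have h := (hi r hr).1
    nlinarith [sq_nonneg ‖j (u r - v r)‖]
  have hjb : ∀ r ∈ Icc (0:ℝ) T, ‖j (u r - v r)‖ ≤ Real.sqrt (2*(E (u r) - E (v r))) := by
    intro r hr
    exact aux_le_sqrt (norm_nonneg _) (by linarith [(hi r hr).1])
  have hg' : ∀ r ∈ Icc (0:ℝ) T,
      HasDerivAt (fun τ => E (u τ)) (-‖gradient E (u r)‖^2) r := by
    intro r hr
    have h1 : HasFDerivAt E (InnerProductSpace.toDual ℝ X₁ (gradient E (u r))) (u r) :=
      (hE (u r)).hasGradientAt.hasFDerivAt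
    have h2 := h1.comp_hasDerivAt r (hu r hr)
    refine h2.congr_deriv ?_
    rw [InnerProductSpace.toDual_apply_apply, inner_neg_right, real_inner_self_eq_norm_sq]
  have hdist : ∀ σ τ, σ ∈ Icc (0:ℝ) T → τ ∈ Icc (0:ℝ) T → σ ≤ τ →
      ‖u τ - u σ‖^2 ≤ (τ-σ)*(E (u σ) - E (u τ)) := by
    intro σ τ hσ hτ hστ
    have hsub : Icc σ τ ⊆ Icc (0:ℝ) T := Icc_subset_Icc hσ.1 hτ.2
    exact aux_norm_sub_sq_le (u' := fun r => -(gradient E (u r)))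
      (g := fun τ => E (u τ)) (g' := fun r => -‖gradient E (u r)‖^2) hστ
      (fun r hr => hu r (hsub hr)) (fun r hr => hg' r (hsub hr))
      (fun r hr => by simp)
  have hanti : ∀ σ τ, σ ∈ Icc (0:ℝ) T → τ ∈ Icc (0:ℝ) T → σ ≤ τ → E (u τ) ≤ E (u σ) := by
    intro σ τ hσ hτ hστ
    rcases eq_or_lt_of_le hστ with rfl | hlt
    · exact le_refl _
    · have h := hdist σ τ hσ hτ hστ
      nlinarith [sq_nonneg ‖u τ - u σ‖]
  have hhd : ∀ σ τ, σ ∈ Icc (0:ℝ) T → τ ∈ Icc (0:ℝ) T →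
      E (v σ) - E (v τ) ≤ δ*(Real.sqrt (2*(E (u σ) - E (v σ)))
        + Real.sqrt (2*(E (u τ) - E (v τ))) + ‖u τ - u σ‖) := by
    intro σ τ hσ hτ
    have h1 := hLip (v σ) (hN σ hσ) (v τ) (hN τ hτ)
    have h2 : v σ - v τ = -(u σ - v σ) + (u σ - u τ) + (u τ - v τ) := by abel
    have h3 : ‖j (v σ - v τ)‖ ≤ ‖j (u σ - v σ)‖ + ‖u τ - u σ‖ + ‖j (u τ - v τ)‖ := by
      rw [h2, map_add, map_add, map_neg]
      calc ‖-(j (u σ - v σ)) + j (u σ - u τ) + j (u τ - v τ)‖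
          ≤ ‖-(j (u σ - v σ)) + j (u σ - u τ)‖ + ‖j (u τ - v τ)‖ := norm_add_le _ _
        _ ≤ ‖-(j (u σ - v σ))‖ + ‖j (u σ - u τ)‖ + ‖j (u τ - v τ)‖ := by
            linarith [norm_add_le (-(j (u σ - v σ))) (j (u σ - u τ))]
        _ ≤ ‖j (u σ - v σ)‖ + ‖u τ - u σ‖ + ‖j (u τ - v τ)‖ := by
            rw [norm_neg]
            have := hj (u σ - u τ)
            rw [norm_sub_rev (u σ) (u τ)] at this
            linarith
    have h4 : E (v σ) - E (v τ) ≤ |E (v σ) - E (v τ)| := le_abs_self _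
    have h5 : δ * ‖j (v σ - v τ)‖
        ≤ δ * (‖j (u σ - v σ)‖ + ‖u τ - u σ‖ + ‖j (u τ - v τ)‖) :=
      mul_le_mul_of_nonneg_left h3 hδ0.le
    have h6 : ‖j (u σ - v σ)‖ ≤ Real.sqrt (2*(E (u σ) - E (v σ))) := hjb σ hσ
    have h7 : ‖j (u τ - v τ)‖ ≤ Real.sqrt (2*(E (u τ) - E (v τ))) := hjb τ hτ
    have h8 : δ * (‖j (u σ - v σ)‖ + ‖u τ - u σ‖ + ‖j (u τ - v τ)‖)
        ≤ δ*(Real.sqrt (2*(E (u σ) - E (v σ))) + Real.sqrt (2*(E (u τ) - E (v τ)))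
          + ‖u τ - u σ‖) := by
      apply mul_le_mul_of_nonneg_left _ hδ0.le
      linarith
    linarith
  -- D bound
  have hDb : ∀ σ τ, σ ∈ Icc (0:ℝ) T → τ ∈ Icc (0:ℝ) T → σ ≤ τ → τ - σ ≤ 1 →
      E (u σ) - E (u τ) ≤ 4*(E (u σ) - E (v σ)) + 3*δ^2 := by
    intro σ τ hσ hτ hστ hgap
    have hDnn : 0 ≤ E (u σ) - E (u τ) := by linarith [hanti σ τ hσ hτ hστ]
    have ha := hEnn σ hσ
    have hb := hEnn τ hτ
    have hX : ‖u τ - u σ‖ ≤ Real.sqrt (E (u σ) - E (u τ)) := by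
      apply aux_le_sqrt (norm_nonneg _)
      calc ‖u τ - u σ‖^2 ≤ (τ-σ)*(E (u σ) - E (u τ)) := hdist σ τ hσ hτ hστ
        _ ≤ 1*(E (u σ) - E (u τ)) := by nlinarith
        _ = E (u σ) - E (u τ) := one_mul _
    have h1 : δ*Real.sqrt (E (u σ) - E (u τ)) ≤ (1/2)*(E (u σ) - E (u τ)) + δ^2/(4*(1/2)) :=
      aux_amgm hDnn (by norm_num) hδ0.le
    have h2 : δ*Real.sqrt (2*(E (u σ) - E (v σ))) ≤ (E (u σ) - E (v σ)) + δ^2/2 := by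
      have := aux_amgm (x := 2*(E (u σ) - E (v σ))) (c := 1/2) (d := δ) (by linarith) (by norm_num) hδ0.le
      calc δ*Real.sqrt (2*(E (u σ) - E (v σ)))
          ≤ (1/2)*(2*(E (u σ) - E (v σ))) + δ^2/(4*(1/2)) := this
        _ = (E (u σ) - E (v σ)) + δ^2/2 := by ring
    have h3 : δ*Real.sqrt (2*(E (u τ) - E (v τ))) ≤ (E (u τ) - E (v τ)) + δ^2/2 := by
      have := aux_amgm (x := 2*(E (u τ) - E (v τ))) (c := 1/2) (d := δ) (by linarith) (by norm_num) hδ0.le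
      calc δ*Real.sqrt (2*(E (u τ) - E (v τ)))
          ≤ (1/2)*(2*(E (u τ) - E (v τ))) + δ^2/(4*(1/2)) := this
        _ = (E (u τ) - E (v τ)) + δ^2/2 := by ring
    have h4 := hhd σ τ hσ hτ
    have h5 : δ*‖u τ - u σ‖ ≤ δ*Real.sqrt (E (u σ) - E (u τ)) :=
      mul_le_mul_of_nonneg_left hX hδ0.le
    have hexp : E (u σ) - E (u τ) = (E (u σ) - E (v σ)) - (E (u τ) - E (v τ))
        + (E (v σ) - E (v τ)) := by ring
    nlinarith [h4, h5, h1, h2, h3]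
  -- piece bound
  have hpiece : ∀ σ τ, σ ∈ Icc (0:ℝ) T → τ ∈ Icc (0:ℝ) T → σ ≤ τ → τ - σ ≤ 1 →
      ‖u τ - u σ‖ ≤ 2*Real.sqrt (E (u σ) - E (v σ)) + 2*δ := by
    intro σ τ hσ hτ hστ hgap
    have ha := hEnn σ hσ
    have hDnn : 0 ≤ E (u σ) - E (u τ) := by linarith [hanti σ τ hσ hτ hστ]
    have hX : ‖u τ - u σ‖ ≤ Real.sqrt (4*(E (u σ) - E (v σ)) + 3*δ^2) := by
      apply aux_le_sqrt (norm_nonneg _)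
      calc ‖u τ - u σ‖^2 ≤ (τ-σ)*(E (u σ) - E (u τ)) := hdist σ τ hσ hτ hστ
        _ ≤ 1*(E (u σ) - E (u τ)) := by nlinarith
        _ ≤ 4*(E (u σ) - E (v σ)) + 3*δ^2 := by
            rw [one_mul]; exact hDb σ τ hσ hτ hστ hgap
    have h1 : Real.sqrt (4*(E (u σ) - E (v σ)) + 3*δ^2)
        ≤ Real.sqrt (4*(E (u σ) - E (v σ))) + Real.sqrt (3*δ^2) :=
      aux_sqrt_add_le _ _ (by linarith) (by positivity)
    have h2 : Real.sqrt (4*(E (u σ) - E (v σ))) = 2*Real.sqrt (E (u σ) - E (v σ)) := by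
      rw [show (4:ℝ)*(E (u σ) - E (v σ)) = 2^2*(E (u σ) - E (v σ)) by ring,
        Real.sqrt_mul (by positivity), Real.sqrt_sq (by norm_num : (0:ℝ) ≤ 2)]
    have h3 : Real.sqrt (3*δ^2) ≤ 2*δ := by
      calc Real.sqrt (3*δ^2) ≤ Real.sqrt ((2*δ)^2) := Real.sqrt_le_sqrt (by nlinarith)
        _ = 2*δ := Real.sqrt_sq (by positivity)
    linarith
  -- ONE STEP
  have onestep : ∀ ε' : ℝ, 0 < ε' → ε' ≤ 1/2 → ∀ σ τ, σ ∈ Icc (0:ℝ) T → τ ∈ Icc (0:ℝ) T →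
      σ ≤ τ → τ - σ ≤ 1 →
      (E (u τ) - E (v τ)) * (1-ε') ≤ (Real.exp (-(2/(1+ε'))*(τ-σ)) + 4*ε') * (E (u σ) - E (v σ))
        + (8/ε')*δ^2 := by
    intro ε' hε' hε'2 σ τ hσ hτ hστ hgap
    have hsub : Icc σ τ ⊆ Icc (0:ℝ) T := Icc_subset_Icc hσ.1 hτ.2
    have ha := hEnn σ hσ
    have hb := hEnn τ hτ
    have hDnn : 0 ≤ E (u σ) - E (u τ) := by linarith [hanti σ τ hσ hτ hστ]
    obtain ⟨P, hPdef⟩ : ∃ P : ℝ, P = δ^2/ε' := ⟨_, rfl⟩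
    have hPnn : 0 ≤ P := by rw [hPdef]; positivity
    have hPδ : δ^2 ≤ P := by
      rw [hPdef, le_div_iff₀ hε']; nlinarith
    -- uniform distance bound on the interval
    have hXr : ∀ r ∈ Icc σ τ, ‖u r - u σ‖ ≤ Real.sqrt (E (u σ) - E (u τ)) := by
      intro r hr
      apply aux_le_sqrt (norm_nonneg _)
      have h1 : E (u τ) ≤ E (u r) := hanti r τ (hsub hr) hτ hr.2
      have h2 : E (u r) ≤ E (u σ) := hanti σ r hσ (hsub hr) hr.1
      calc ‖u r - u σ‖^2 ≤ (r-σ)*(E (u σ) - E (u r)) := hdist σ r hσ (hsub hr) hr.1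
        _ ≤ E (u σ) - E (u τ) := by nlinarith [hr.1, hr.2]
    -- bound on δ √D
    have hsD : δ * Real.sqrt (E (u σ) - E (u τ)) ≤ ε'*(E (u σ) - E (v σ)) + P + 2*δ^2 := by
      have h1 := hDb σ τ hσ hτ hστ hgap
      have h2 : Real.sqrt (E (u σ) - E (u τ))
          ≤ Real.sqrt (4*(E (u σ) - E (v σ))) + Real.sqrt (3*δ^2) :=
        le_trans (Real.sqrt_le_sqrt (by linarith))
          (aux_sqrt_add_le _ _ (by linarith) (by positivity))
      have h3 : Real.sqrt (4*(E (u σ) - E (v σ))) = 2*Real.sqrt (E (u σ) - E (v σ)) := by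
        rw [show (4:ℝ)*(E (u σ) - E (v σ)) = 2^2*(E (u σ) - E (v σ)) by ring,
          Real.sqrt_mul (by positivity), Real.sqrt_sq (by norm_num : (0:ℝ) ≤ 2)]
      have h4 : Real.sqrt (3*δ^2) ≤ 2*δ := by
        calc Real.sqrt (3*δ^2) ≤ Real.sqrt ((2*δ)^2) := Real.sqrt_le_sqrt (by nlinarith)
          _ = 2*δ := Real.sqrt_sq (by positivity)
      have h5 : (2*δ) * Real.sqrt (E (u σ) - E (v σ)) ≤ ε'*(E (u σ) - E (v σ)) + (2*δ)^2/(4*ε') :=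
        aux_amgm ha hε' (by positivity)
      have h6 : (2*δ)^2/(4*ε') = P := by rw [hPdef]; field_simp; ring
      have h7 : δ * Real.sqrt (E (u σ) - E (u τ))
          ≤ δ * (2*Real.sqrt (E (u σ) - E (v σ)) + 2*δ) := by
        apply mul_le_mul_of_nonneg_left _ hδ0.le
        rw [h3] at h2; linarith
      nlinarith [Real.sqrt_nonneg (E (u σ) - E (v σ))]
    -- amgm for √(2 ℰ r)
    have hs2 : ∀ r ∈ Icc (0:ℝ) T, δ * Real.sqrt (2*(E (u r) - E (v r)))
        ≤ ε'*(E (u r) - E (v r)) + P/2 := by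
      intro r hr
      have h0 := aux_amgm (x := 2*(E (u r) - E (v r))) (c := ε'/2) (d := δ)
        (by linarith [hEnn r hr]) (by positivity) hδ0.le
      have h1 : δ^2/(4*(ε'/2)) = P/2 := by rw [hPdef]; field_simp; ring
      calc δ * Real.sqrt (2*(E (u r) - E (v r)))
          ≤ (ε'/2)*(2*(E (u r) - E (v r))) + δ^2/(4*(ε'/2)) := h0
        _ = ε'*(E (u r) - E (v r)) + P/2 := by rw [h1]; ring
    obtain ⟨Q, hQdef⟩ : ∃ Q : ℝ, Q = P/2 + δ*Real.sqrt (2*(E (u σ) - E (v σ)))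
      + δ*Real.sqrt (E (u σ) - E (u τ)) := ⟨_, rfl⟩
    have hQnn : 0 ≤ Q := by
      rw [hQdef]
      have := Real.sqrt_nonneg (2*(E (u σ) - E (v σ)))
      have := Real.sqrt_nonneg (E (u σ) - E (u τ))
      nlinarith
    have hQb : Q ≤ 2*ε'*(E (u σ) - E (v σ)) + 4*P := by
      have h1 := hs2 σ hσ
      linarith [hsD, hQdef.le, hQdef.ge, hPδ]
    have hlam : (0:ℝ) < 2/(1+ε') := by positivity
    -- interior differential inequality
    have hint : ∀ r ∈ Icc σ τ, -‖gradient E (u r)‖^2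
        ≤ -(2/(1+ε')) * (E (u r) - (E (v σ) + Q)) := by
      intro r hr
      have hrI := hsub hr
      have hEr := hEnn r hrI
      have h2 := (hi r hrI).2
      have hhr := hhd r σ hrI hσ
      rw [norm_sub_rev (u σ) (u r)] at hhr
      have hsr := hs2 r hrI
      have hX := hXr r hr
      have hδX : δ*‖u r - u σ‖ ≤ δ*Real.sqrt (E (u σ) - E (u τ)) :=
        mul_le_mul_of_nonneg_left hX hδ0.le
      have key : E (u r) - (E (v σ) + Q) ≤ (1+ε')*(E (u r) - E (v r)) := by
        have hid : (1+ε')*(E (u r) - E (v r))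
            = (E (u r) - E (v r)) + ε'*(E (u r) - E (v r)) := by ring
        linarith [hhr, hsr, hδX, hQdef.le, hQdef.ge]
      have h4 : (2/(1+ε'))*(E (u r) - (E (v σ) + Q)) ≤ 2*(E (u r) - E (v r)) := by
        calc (2/(1+ε'))*(E (u r) - (E (v σ) + Q))
            ≤ (2/(1+ε'))*((1+ε')*(E (u r) - E (v r))) :=
              mul_le_mul_of_nonneg_left key hlam.le
          _ = 2*(E (u r) - E (v r)) := by field_simp
      linarith
    -- exponential decay
    have hdec := aux_exp_decay (g := fun r => E (u r)) (g' := fun r => -‖gradient E (u r)‖^2)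
      (lam := 2/(1+ε')) (c := E (v σ) + Q) hστ (fun r hr => hg' r (hsub hr)) hint
    have hexpa : Real.exp (-(2/(1+ε'))*(τ-σ)) * ((E (u σ)) - (E (v σ) + Q))
        ≤ Real.exp (-(2/(1+ε'))*(τ-σ)) * (E (u σ) - E (v σ)) := by
      apply mul_le_mul_of_nonneg_left _ (Real.exp_nonneg _)
      linarith
    -- endpoint estimate
    have hend := hhd σ τ hσ hτ
    have hsb := hs2 τ hτ
    have hXτ := hXr τ (right_mem_Icc.2 hστ)
    have hδXτ : δ*‖u τ - u σ‖ ≤ δ*Real.sqrt (E (u σ) - E (u τ)) :=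
      mul_le_mul_of_nonneg_left hXτ hδ0.le
    -- combine
    have hcomb : (E (u τ) - E (v τ)) * (1-ε')
        ≤ Real.exp (-(2/(1+ε'))*(τ-σ)) * (E (u σ) - E (v σ)) + 2*Q := by
      have hid : (E (u τ) - E (v τ)) * (1-ε')
          = (E (u τ) - (E (v σ) + Q)) + (E (v σ) - E (v τ)) + Q - ε'*(E (u τ) - E (v τ)) := by
        ring
      linarith [hdec, hexpa, hend, hsb, hδXτ, hQdef.le, hQdef.ge]
    have hP8 : (8/ε')*δ^2 = 8*P := by rw [hPdef]; field_simp
    have hEexp : (Real.exp (-(2/(1+ε'))*(τ-σ)) + 4*ε') * (E (u σ) - E (v σ))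
        = Real.exp (-(2/(1+ε'))*(τ-σ)) * (E (u σ) - E (v σ)) + 4*ε'*(E (u σ) - E (v σ)) := by
      ring
    linarith [hcomb, hQb]
  -- DECAY
  have decay : ∀ e : ℝ, 0 < e → e < 1 → ∀ σ τ, σ ∈ Icc (0:ℝ) T → τ ∈ Icc (0:ℝ) T → σ ≤ τ →
      E (u τ) - E (v τ) ≤ 6*Real.exp 2*Real.exp (-(2-e)*(τ-σ))*(E (u σ) - E (v σ))
        + (100000/e)*δ^2 := by
    intro e he0 he1 σ τ hσ hτ hστ
    have hq0 : (0:ℝ) < Real.exp (-(2-e)) := Real.exp_pos _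
    have hq1 : Real.exp (-(2-e)) ≤ 1/2 := by
      have h1 : Real.exp (-(2-e)) ≤ Real.exp (-1) := Real.exp_le_exp.2 (by linarith)
      have h2 : Real.exp (-1:ℝ) ≤ 1/2 := by
        rw [Real.exp_neg, inv_le_comm₀ (Real.exp_pos 1) (by norm_num)]
        have := Real.add_one_le_exp (1:ℝ); linarith
      linarith
    have hKnn : (0:ℝ) ≤ 12800/e*δ^2 := by positivity
    -- iteration
    have step : ∀ m : ℕ, σ + (m:ℝ) ≤ τ →
        E (u (σ+(m:ℝ))) - E (v (σ+(m:ℝ)))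
          ≤ Real.exp (-(2-e))^m * (E (u σ) - E (v σ)) + 12800/e*δ^2 := by
      intro m
      induction m with
      | zero =>
        intro _
        simp only [Nat.cast_zero, add_zero, pow_zero, one_mul]
        linarith [hKnn]
      | succ m ih =>
        intro hm1
        have hc : ((m+1:ℕ):ℝ) = (m:ℝ)+1 := by push_cast; ring
        rw [hc] at hm1 ⊢
        rw [show σ + ((m:ℝ)+1) = σ + (m:ℝ) + 1 by ring]
        have hm0 : (0:ℝ) ≤ (m:ℝ) := Nat.cast_nonneg m
        have hmle : σ + (m:ℝ) ≤ τ := by linarith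
        have ihm := ih hmle
        have hσm : σ + (m:ℝ) ∈ Icc (0:ℝ) T := ⟨by linarith [hσ.1], by linarith [hτ.2]⟩
        have hσm1 : σ + (m:ℝ) + 1 ∈ Icc (0:ℝ) T := ⟨by linarith [hσ.1], by linarith [hτ.2]⟩
        have hos := onestep (e/400) (by positivity) (by linarith) (σ+(m:ℝ)) (σ+(m:ℝ)+1)
          hσm hσm1 (by linarith) (by linarith)
        rw [show (σ+(m:ℝ)+1) - (σ+(m:ℝ)) = 1 by ring] at hos
        have hrate := aux_rate he0 he1
        have ham := hEnn _ hσm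
        have hpos : (0:ℝ) < 1 - e/400 := by linarith
        have hstep1 : E (u (σ+(m:ℝ)+1)) - E (v (σ+(m:ℝ)+1))
            ≤ Real.exp (-(2-e)) * (E (u (σ+(m:ℝ))) - E (v (σ+(m:ℝ)))) + 6400/e*δ^2 := by
          have h1 : (Real.exp (-(2/(1+e/400))*1) + 4*(e/400)) * (E (u (σ+(m:ℝ))) - E (v (σ+(m:ℝ))))
              ≤ ((1-(e/400)) * Real.exp (-(2-e))) * (E (u (σ+(m:ℝ))) - E (v (σ+(m:ℝ)))) :=
            mul_le_mul_of_nonneg_right hrate ham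
          have h2 : (8/(e/400))*δ^2 ≤ (1-e/400) * (6400/e*δ^2) := by
            rw [show (8:ℝ)/(e/400) = 3200/e by field_simp; ring]
            have h3 : (1-e/400) * (6400/e*δ^2) = 6400/e*δ^2 - 16*δ^2 := by
              field_simp; ring
            rw [h3]
            have h4 : (16:ℝ)*δ^2 ≤ 3200/e*δ^2 := by
              apply mul_le_mul_of_nonneg_right _ (sq_nonneg δ)
              rw [le_div_iff₀ he0]; nlinarith
            have h5 : (3200:ℝ)/e*δ^2 + 3200/e*δ^2 = 6400/e*δ^2 := by ring
            linarith
          have hfin : (E (u (σ+(m:ℝ)+1)) - E (v (σ+(m:ℝ)+1))) * (1-e/400)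
              ≤ (Real.exp (-(2-e)) * (E (u (σ+(m:ℝ))) - E (v (σ+(m:ℝ)))) + 6400/e*δ^2)
                * (1-e/400) := by
            have hexpand : (Real.exp (-(2-e)) * (E (u (σ+(m:ℝ))) - E (v (σ+(m:ℝ)))) + 6400/e*δ^2)
                * (1-e/400)
                = ((1-(e/400)) * Real.exp (-(2-e))) * (E (u (σ+(m:ℝ))) - E (v (σ+(m:ℝ))))
                  + (1-e/400) * (6400/e*δ^2) := by ring
            rw [hexpand]
            linarith [hos, h1, h2]
          exact le_of_mul_le_mul_right hfin hpos
        have hmul : Real.exp (-(2-e)) * (E (u (σ+(m:ℝ))) - E (v (σ+(m:ℝ))))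
            ≤ Real.exp (-(2-e)) * (Real.exp (-(2-e))^m * (E (u σ) - E (v σ)) + 12800/e*δ^2) :=
          mul_le_mul_of_nonneg_left ihm hq0.le
        have hpow : Real.exp (-(2-e)) * (Real.exp (-(2-e))^m * (E (u σ) - E (v σ)))
            = Real.exp (-(2-e))^(m+1) * (E (u σ) - E (v σ)) := by
          rw [pow_succ]; ring
        have hK : Real.exp (-(2-e)) * (12800/e*δ^2) + 6400/e*δ^2 ≤ 12800/e*δ^2 := by
          have hKq := mul_le_mul_of_nonneg_right hq1 hKnn
          have hhalf : (1:ℝ)/2*(12800/e*δ^2) = 6400/e*δ^2 := by ring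
          linarith
        calc E (u (σ+(m:ℝ)+1)) - E (v (σ+(m:ℝ)+1))
            ≤ Real.exp (-(2-e)) * (E (u (σ+(m:ℝ))) - E (v (σ+(m:ℝ)))) + 6400/e*δ^2 := hstep1
          _ ≤ Real.exp (-(2-e)) * (Real.exp (-(2-e))^m * (E (u σ) - E (v σ)) + 12800/e*δ^2)
              + 6400/e*δ^2 := by linarith
          _ = Real.exp (-(2-e))^(m+1) * (E (u σ) - E (v σ))
              + (Real.exp (-(2-e)) * (12800/e*δ^2) + 6400/e*δ^2) := by
              rw [← hpow]; ring
          _ ≤ Real.exp (-(2-e))^(m+1) * (E (u σ) - E (v σ)) + 12800/e*δ^2 := by linarith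
    -- apply at n = floor
    have hτσ : (0:ℝ) ≤ τ - σ := by linarith
    have hn1 : ((⌊τ-σ⌋₊ : ℕ):ℝ) ≤ τ - σ := Nat.floor_le hτσ
    have hn2 : τ - σ < (⌊τ-σ⌋₊:ℝ) + 1 := Nat.lt_floor_add_one _
    have hsn := step ⌊τ-σ⌋₊ (by linarith)
    have hσn : σ + ((⌊τ-σ⌋₊:ℕ):ℝ) ∈ Icc (0:ℝ) T :=
      ⟨by have h0 : (0:ℝ) ≤ ((⌊τ-σ⌋₊:ℕ):ℝ) := Nat.cast_nonneg _; linarith [hσ.1], by linarith [hτ.2]⟩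
    have hEn := hEnn _ hσn
    -- crude last step
    have hcr := onestep (1/2) (by norm_num) (le_refl _) (σ+((⌊τ-σ⌋₊:ℕ):ℝ)) τ hσn hτ
      (by linarith) (by linarith)
    have hexple : Real.exp (-(2/(1+1/2))*(τ-(σ+((⌊τ-σ⌋₊:ℕ):ℝ)))) ≤ 1 := by
      rw [Real.exp_le_one_iff]
      have h1 : (0:ℝ) ≤ τ-(σ+((⌊τ-σ⌋₊:ℕ):ℝ)) := by linarith
      have h2 : (0:ℝ) < 2/(1+1/2:ℝ) := by norm_num
      nlinarith
    have hcr2 : E (u τ) - E (v τ) ≤ 6*(E (u (σ+((⌊τ-σ⌋₊:ℕ):ℝ))) - E (v (σ+((⌊τ-σ⌋₊:ℕ):ℝ))))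
        + 32*δ^2 := by
      have hh : (8:ℝ)/(1/2) = 16 := by norm_num
      rw [hh] at hcr
      nlinarith [hcr, hexple, hEn]
    -- power bound
    have hqn : Real.exp (-(2-e))^(⌊τ-σ⌋₊) ≤ Real.exp 2 * Real.exp (-(2-e)*(τ-σ)) := by
      rw [← Real.exp_nat_mul, ← Real.exp_add]
      apply Real.exp_le_exp.2
      nlinarith [hn1, hn2, he0, he1]
    have hEσ := hEnn σ hσ
    have hqnE : Real.exp (-(2-e))^(⌊τ-σ⌋₊) * (E (u σ) - E (v σ))
        ≤ Real.exp 2 * Real.exp (-(2-e)*(τ-σ)) * (E (u σ) - E (v σ)) :=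
      mul_le_mul_of_nonneg_right hqn hEσ
    have h32 : (32:ℝ)*δ^2 + 6*(12800/e*δ^2) ≤ 100000/e*δ^2 := by
      have h1 : (32:ℝ)*δ^2 ≤ 23200/e*δ^2 := by
        apply mul_le_mul_of_nonneg_right _ (sq_nonneg δ)
        rw [le_div_iff₀ he0]; nlinarith
      have h2 : 6*((12800:ℝ)/e*δ^2) + 23200/e*δ^2 = 100000/e*δ^2 := by ring
      linarith
    have h6 : 6*(E (u (σ+((⌊τ-σ⌋₊:ℕ):ℝ))) - E (v (σ+((⌊τ-σ⌋₊:ℕ):ℝ))))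
        ≤ 6*(Real.exp (-(2-e))^(⌊τ-σ⌋₊) * (E (u σ) - E (v σ)) + 12800/e*δ^2) := by
      linarith [hsn]
    linarith [hcr2, h6, hqnE, h32]
  constructor
  · -- exponential decay conclusion
    intro t ht
    have h0I : (0:ℝ) ∈ Icc (0:ℝ) T := ⟨le_refl _, hT⟩
    have hd := decay ε hε0 hε1 0 t h0I ht ht.1
    rw [sub_zero] at hd
    have h1 := (hi t ht).1
    have hE0 := hEnn 0 h0I
    have hexp0 : (0:ℝ) ≤ Real.exp (-(2-ε)*t) * (E (u 0) - E (v 0)) :=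
      mul_nonneg (Real.exp_nonneg _) hE0
    have hC1' : 18*Real.exp 2 ≤ 10^6/ε := by
      rw [le_div_iff₀ hε0]
      nlinarith [aux_exp_two_bounds.2]
    have hC1 : 18*Real.exp 2 * (Real.exp (-(2-ε)*t) * (E (u 0) - E (v 0)))
        ≤ (10^6/ε) * (Real.exp (-(2-ε)*t) * (E (u 0) - E (v 0))) :=
      mul_le_mul_of_nonneg_right hC1' hexp0
    have hC2 : (300000:ℝ)/ε*δ^2 ≤ (10^6/ε)*δ^2 := by
      apply mul_le_mul_of_nonneg_right _ (sq_nonneg δ)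
      gcongr
      norm_num
    have harg : Real.exp (-((2-ε)*t)) = Real.exp (-(2-ε)*t) := by ring_nf
    rw [harg]
    have h3' : (3:ℝ)*(100000/ε*δ^2) = 300000/ε*δ^2 := by ring
    nlinarith [hd, h1, hC1, hC2, sq_nonneg ‖j (u t - v t)‖]
  · -- slow motion conclusion
    intro s t hs0 hst htT
    have hsI : s ∈ Icc (0:ℝ) T := ⟨hs0.le, by linarith⟩
    have htI : t ∈ Icc (0:ℝ) T := ⟨by linarith, htT⟩
    have hts0 : (0:ℝ) ≤ t - s := by linarith
    have haσ := hEnn s hsI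
    have hS0 : (0:ℝ) ≤ Real.sqrt (E (u s) - E (v s)) := Real.sqrt_nonneg _
    have hr0 : (0:ℝ) ≤ Real.exp (-(3/4:ℝ)) := Real.exp_nonneg _
    have hr1 : Real.exp (-(3/4:ℝ)) ≤ 1 := Real.exp_le_one_iff.2 (by norm_num)
    -- sqrt-energy bound at integer points
    have hsqb : ∀ k : ℕ, s + (k:ℝ) ≤ t → Real.sqrt (E (u (s+(k:ℝ))) - E (v (s+(k:ℝ))))
        ≤ 7*(Real.exp (-(3/4:ℝ)))^k*Real.sqrt (E (u s) - E (v s)) + 450*δ := by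
      intro k hk
      have hk0 : (0:ℝ) ≤ (k:ℝ) := Nat.cast_nonneg _
      have hkI : s + (k:ℝ) ∈ Icc (0:ℝ) T := ⟨by linarith, by linarith⟩
      have hd := decay (1/2) (by norm_num) (by norm_num) s (s+(k:ℝ)) hsI hkI (by linarith)
      rw [show s+(k:ℝ)-s = (k:ℝ) by ring] at hd
      have hd2 : E (u (s+(k:ℝ))) - E (v (s+(k:ℝ)))
          ≤ 48*Real.exp (-(3/2:ℝ)*(k:ℝ))*(E (u s) - E (v s)) + 200000*δ^2 := by
        have hexpk : Real.exp (-(2-1/2)*(k:ℝ)) = Real.exp (-(3/2:ℝ)*(k:ℝ)) := by norm_num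
        have h200 : (100000:ℝ)/(1/2) = 200000 := by norm_num
        rw [hexpk, h200] at hd
        have h48 : 6*Real.exp 2*Real.exp (-(3/2:ℝ)*(k:ℝ)) ≤ 48*Real.exp (-(3/2:ℝ)*(k:ℝ)) := by
          nlinarith [aux_exp_two_bounds.2, Real.exp_nonneg (-(3/2:ℝ)*(k:ℝ))]
        have := mul_le_mul_of_nonneg_right h48 haσ
        linarith
      have hXnn : (0:ℝ) ≤ Real.exp (-(3/2:ℝ)*(k:ℝ)) := Real.exp_nonneg _
      have hsq1 : Real.sqrt (E (u (s+(k:ℝ))) - E (v (s+(k:ℝ))))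
          ≤ Real.sqrt (48*Real.exp (-(3/2:ℝ)*(k:ℝ))*(E (u s) - E (v s)) + 200000*δ^2) :=
        Real.sqrt_le_sqrt hd2
      have hsq2 : Real.sqrt (48*Real.exp (-(3/2:ℝ)*(k:ℝ))*(E (u s) - E (v s)) + 200000*δ^2)
          ≤ Real.sqrt (48*Real.exp (-(3/2:ℝ)*(k:ℝ))*(E (u s) - E (v s)))
            + Real.sqrt (200000*δ^2) :=
        aux_sqrt_add_le _ _ (by positivity) (by positivity)
      have hsq3 : Real.sqrt (48*Real.exp (-(3/2:ℝ)*(k:ℝ))*(E (u s) - E (v s)))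
          = Real.sqrt 48 * Real.sqrt (Real.exp (-(3/2:ℝ)*(k:ℝ)))
            * Real.sqrt (E (u s) - E (v s)) := by
        rw [Real.sqrt_mul (by positivity), Real.sqrt_mul (by norm_num)]
      have hX2 : Real.sqrt (Real.exp (-(3/2:ℝ)*(k:ℝ))) = (Real.exp (-(3/4:ℝ)))^k := by
        rw [show (-(3/2:ℝ)*(k:ℝ)) = ((-(3/4:ℝ))*(k:ℝ)) + ((-(3/4:ℝ))*(k:ℝ)) by ring,
          Real.exp_add, Real.sqrt_mul_self (Real.exp_nonneg _),
          show (-(3/4:ℝ))*(k:ℝ) = (k:ℝ)*(-(3/4:ℝ)) by ring, Real.exp_nat_mul]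
      have h48b : Real.sqrt 48 ≤ 7 := by
        calc Real.sqrt 48 ≤ Real.sqrt (7^2) := Real.sqrt_le_sqrt (by norm_num)
          _ = 7 := Real.sqrt_sq (by norm_num)
      have h450 : Real.sqrt (200000*δ^2) ≤ 450*δ := by
        calc Real.sqrt (200000*δ^2) ≤ Real.sqrt ((450*δ)^2) := Real.sqrt_le_sqrt (by nlinarith)
          _ = 450*δ := Real.sqrt_sq (by positivity)
      have hpk : (0:ℝ) ≤ (Real.exp (-(3/4:ℝ)))^k := pow_nonneg hr0 k
      have hmono : Real.sqrt 48 * Real.sqrt (Real.exp (-(3/2:ℝ)*(k:ℝ)))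
            * Real.sqrt (E (u s) - E (v s))
          ≤ 7*(Real.exp (-(3/4:ℝ)))^k*Real.sqrt (E (u s) - E (v s)) := by
        rw [hX2]
        apply mul_le_mul_of_nonneg_right _ hS0
        apply mul_le_mul_of_nonneg_right h48b hpk
      rw [hsq3] at hsq2
      linarith
    -- telescoping
    have tele : ∀ m : ℕ, s + (m:ℝ) ≤ t →
        ‖u (s+(m:ℝ)) - u s‖ ≤ ∑ k ∈ Finset.range m,
          (14*(Real.exp (-(3/4:ℝ)))^k*Real.sqrt (E (u s) - E (v s)) + 902*δ) := by
      intro m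
      induction m with
      | zero => intro _; simp
      | succ m ih =>
        intro hm1
        have hc : ((m+1:ℕ):ℝ) = (m:ℝ)+1 := by push_cast; ring
        rw [hc] at hm1 ⊢
        rw [show s + ((m:ℝ)+1) = s + (m:ℝ) + 1 by ring]
        have hm0 : (0:ℝ) ≤ (m:ℝ) := Nat.cast_nonneg _
        have hmle : s + (m:ℝ) ≤ t := by linarith
        have hmI : s + (m:ℝ) ∈ Icc (0:ℝ) T := ⟨by linarith, by linarith⟩
        have hm1I : s + (m:ℝ) + 1 ∈ Icc (0:ℝ) T := ⟨by linarith, by linarith⟩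
        have hp := hpiece (s+(m:ℝ)) (s+(m:ℝ)+1) hmI hm1I (by linarith) (by linarith)
        have hsk := hsqb m hmle
        have htri : ‖u (s+(m:ℝ)+1) - u s‖
            ≤ ‖u (s+(m:ℝ)+1) - u (s+(m:ℝ))‖ + ‖u (s+(m:ℝ)) - u s‖ := by
          have := norm_add_le (u (s+(m:ℝ)+1) - u (s+(m:ℝ))) (u (s+(m:ℝ)) - u s)
          simpa using this
        rw [Finset.sum_range_succ]
        have hineq : ‖u (s+(m:ℝ)+1) - u (s+(m:ℝ))‖
            ≤ 14*(Real.exp (-(3/4:ℝ)))^m*Real.sqrt (E (u s) - E (v s)) + 902*δ := by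
          linarith
        linarith [ih hmle]
    -- assemble
    have hn1 : ((⌊t-s⌋₊:ℕ):ℝ) ≤ t - s := Nat.floor_le hts0
    have hn2 : t - s < (⌊t-s⌋₊:ℝ) + 1 := Nat.lt_floor_add_one _
    have hn0 : (0:ℝ) ≤ ((⌊t-s⌋₊:ℕ):ℝ) := Nat.cast_nonneg _
    have hnI : s + ((⌊t-s⌋₊:ℕ):ℝ) ∈ Icc (0:ℝ) T := ⟨by linarith, by linarith⟩
    have htel := tele ⌊t-s⌋₊ (by linarith)
    have hpl := hpiece (s+((⌊t-s⌋₊:ℕ):ℝ)) t hnI htI (by linarith) (by linarith)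
    have hsn := hsqb ⌊t-s⌋₊ (by linarith)
    have htri : ‖u t - u s‖ ≤ ‖u t - u (s+((⌊t-s⌋₊:ℕ):ℝ))‖ + ‖u (s+((⌊t-s⌋₊:ℕ):ℝ)) - u s‖ := by
      have := norm_add_le (u t - u (s+((⌊t-s⌋₊:ℕ):ℝ))) (u (s+((⌊t-s⌋₊:ℕ):ℝ)) - u s)
      simpa using this
    have hsum : ∑ k ∈ Finset.range ⌊t-s⌋₊,
        (14*(Real.exp (-(3/4:ℝ)))^k*Real.sqrt (E (u s) - E (v s)) + 902*δ)
        = 14*Real.sqrt (E (u s) - E (v s)) * (∑ k ∈ Finset.range ⌊t-s⌋₊, (Real.exp (-(3/4:ℝ)))^k)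
          + (⌊t-s⌋₊:ℝ)*(902*δ) := by
      rw [Finset.sum_add_distrib, Finset.sum_const, Finset.card_range, nsmul_eq_mul,
        Finset.mul_sum]
      congr 1
      apply Finset.sum_congr rfl
      intro k _
      ring
    have hgeo := aux_geom ⌊t-s⌋₊
    have hgeo2 : 14*Real.sqrt (E (u s) - E (v s))
          * (∑ k ∈ Finset.range ⌊t-s⌋₊, (Real.exp (-(3/4:ℝ)))^k)
        ≤ 14*Real.sqrt (E (u s) - E (v s)) * 3 :=
      mul_le_mul_of_nonneg_left hgeo (by positivity)
    have hrn : (Real.exp (-(3/4:ℝ)))^(⌊t-s⌋₊) ≤ 1 := pow_le_one₀ hr0 hr1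
    have hsnb : 2*Real.sqrt (E (u (s+((⌊t-s⌋₊:ℕ):ℝ))) - E (v (s+((⌊t-s⌋₊:ℕ):ℝ))))
        ≤ 14*Real.sqrt (E (u s) - E (v s)) + 900*δ := by
      have h1 : 7*(Real.exp (-(3/4:ℝ)))^(⌊t-s⌋₊)*Real.sqrt (E (u s) - E (v s))
          ≤ 7*Real.sqrt (E (u s) - E (v s)) := by
        apply mul_le_mul_of_nonneg_right _ hS0
        nlinarith
      linarith
    have hnd : (⌊t-s⌋₊:ℝ)*(902*δ) ≤ (t-s)*(902*δ) :=
      mul_le_mul_of_nonneg_right hn1 (by positivity)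
    have hδts : (0:ℝ) ≤ δ*(t-s+1) := by positivity
    -- final
    have htotal : ‖u t - u s‖ ≤ 56*Real.sqrt (E (u s) - E (v s)) + 902*δ*(t-s+1) := by
      have hA := le_trans htel (by linarith [hsum.le, hgeo2, hnd] :
        (∑ k ∈ Finset.range ⌊t-s⌋₊,
          (14*(Real.exp (-(3/4:ℝ)))^k*Real.sqrt (E (u s) - E (v s)) + 902*δ))
          ≤ 42*Real.sqrt (E (u s) - E (v s)) + (t-s)*(902*δ))
      have hB : ‖u t - u (s+((⌊t-s⌋₊:ℕ):ℝ))‖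
          ≤ 14*Real.sqrt (E (u s) - E (v s)) + 902*δ := by
        linarith [hpl, hsnb]
      have hexpand : (902:ℝ)*δ*(t-s+1) = (t-s)*(902*δ) + 902*δ := by ring
      linarith
    nlinarith [htotal, hS0, hδts]
end
end

section
/- Kernel of the linearized dissipation operator on the half line: If f ∈ C³(ℝ₊) ∩ H¹(ℝ₊) satisfies L f := (−f_xx + G''(v_∞) f)_x = 0 on (0, ∞), then f = α v_∞' (the derivative of v_∞) for some α ∈ ℝ. -/
noncomputable section

set_option maxHeartbeats 1000000

section KernelHelpers
open Set Filter MeasureTheory intervalIntegral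

lemma const_on_Ioi {F : ℝ → ℝ} (hF : ∀ x ∈ Set.Ioi (0:ℝ), HasDerivAt F 0 x) :
    ∀ x ∈ Set.Ioi (0:ℝ), F x = F 1 := by
  intro x hx
  have hsub : Set.uIcc x 1 ⊆ Set.Ioi (0:ℝ) :=
    Set.ordConnected_Ioi.uIcc_subset hx (by norm_num)
  have := intervalIntegral.integral_eq_sub_of_hasDerivAt
    (f := F) (f' := fun _ => (0:ℝ)) (a := x) (b := 1)
    (fun t ht => hF t (hsub ht)) (intervalIntegrable_const)
  have h0 : (0:ℝ) = F 1 - F x := by simpa using this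
  linarith

lemma false_of_le_integrableOn {h : ℝ → ℝ} {a ε : ℝ} (hε : 0 < ε)
    (hint : MeasureTheory.IntegrableOn h (Set.Ioi a))
    (hbd : ∀ x ∈ Set.Ioi a, ε ≤ h x) : False := by
  have hconst : MeasureTheory.IntegrableOn (fun _ => ε) (Set.Ioi a) := by
    refine hint.mono' aestronglyMeasurable_const ?_
    filter_upwards [MeasureTheory.ae_restrict_mem measurableSet_Ioi] with x hx
    have := hbd x hx
    rwa [Real.norm_eq_abs, abs_of_pos hε]
  rw [MeasureTheory.integrableOn_const_iff] at hconst
  rcases hconst with h1 | h2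
  · exact hε.ne' (enorm_eq_zero.1 h1)
  · simp [Real.volume_Ioi] at h2

lemma limit_zero_of_integrableOn {F : ℝ → ℝ}
    (hint : MeasureTheory.IntegrableOn F (Set.Ioi 0)) {L : ℝ}
    (hL : Filter.Tendsto F Filter.atTop (nhds L)) : L = 0 := by
  by_contra hL0
  have hε : 0 < |L| / 2 := by positivity
  have hev : ∀ᶠ x in Filter.atTop, |L| / 2 ≤ |F x| := by
    filter_upwards [hL.eventually (Metric.ball_mem_nhds L hε)] with x hx
    have : |F x - L| < |L| / 2 := by simpa [Real.dist_eq] using hx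
    have h2 : |L| ≤ |F x - L| + |F x| := by
      calc |L| = |F x - (F x - L)| := by ring_nf
      _ ≤ |F x| + |F x - L| := abs_sub _ _
      _ = |F x - L| + |F x| := by ring
    linarith
  rcases Filter.eventually_atTop.1 hev with ⟨a, ha⟩
  have hsub : Set.Ioi (max a 1) ⊆ Set.Ioi (0:ℝ) :=
    Set.Ioi_subset_Ioi (le_trans zero_le_one (le_max_right _ _))
  exact false_of_le_integrableOn hε ((hint.mono_set hsub).abs)
    (fun x hx => ha x (le_trans (le_max_left a 1) (le_of_lt hx)))

lemma const_of_hasDerivAt_zero {F : ℝ → ℝ} (h : ∀ x, HasDerivAt F 0 x) (x y : ℝ) :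
    F x = F y := by
  have := intervalIntegral.integral_eq_sub_of_hasDerivAt
    (f := F) (f' := fun _ => (0:ℝ)) (a := x) (b := y)
    (fun t _ => h t) (intervalIntegrable_const)
  have h0 : (0:ℝ) = F y - F x := by simpa using this
  linarith

lemma vinf_props (G : ℝ → ℝ) (hG : DoubleWell G)
    (vinf : ℝ → ℝ) (hv : ContDiff ℝ 3 vinf)
    (hmono : StrictMono vinf)
    (heq : ∀ x : ℝ, iteratedDeriv 2 vinf x = deriv G (vinf x))
    (hzero : vinf 0 = 0)
    (hlim_top : Filter.Tendsto vinf Filter.atTop (nhds 1))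
    (hlim_bot : Filter.Tendsto vinf Filter.atBot (nhds (-1))) :
    (∀ x, 0 < deriv vinf x) ∧ Filter.Tendsto (deriv vinf) Filter.atTop (nhds 0) ∧
      Filter.Tendsto (fun x => deriv G (vinf x)) Filter.atTop (nhds 0) ∧
      (∀ x, deriv (deriv vinf) x = deriv G (vinf x)) := by
  have hvd : Differentiable ℝ vinf := hv.differentiable (by norm_num)
  have hgd : ∀ x, HasDerivAt vinf (deriv vinf x) x := fun x => (hvd x).hasDerivAt
  -- range bound
  have hle1 : ∀ x, vinf x ≤ 1 := by
    intro x
    refine ge_of_tendsto hlim_top ?_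
    exact Filter.eventually_atTop.2 ⟨x, fun y hy => hmono.monotone hy⟩
  have hlt1 : ∀ x, vinf x < 1 := fun x => lt_of_lt_of_le (hmono (by linarith : x < x + 1)) (hle1 _)
  -- deriv nonneg
  have gnonneg : ∀ x, 0 ≤ deriv vinf x := by
    intro x
    have hs := hasDerivAt_iff_tendsto_slope.1 (hgd x)
    have hs' : Filter.Tendsto (slope vinf x) (nhdsWithin x (Set.Ioi x)) (nhds (deriv vinf x)) :=
      hs.mono_left (nhdsWithin_mono x (fun y hy => ne_of_gt hy))
    refine ge_of_tendsto hs' ?_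
    filter_upwards [self_mem_nhdsWithin] with y hy
    rw [slope_def_field]
    have h1 : vinf x < vinf y := hmono hy
    have h2 : (0:ℝ) < y - x := sub_pos.2 hy
    exact div_nonneg (by linarith) (by linarith [Set.mem_Ioi.1 hy])
  -- G nonneg, deriv G 1 = 0
  have hGnn : ∀ u, 0 ≤ G u := by
    intro u
    by_cases h1 : u = 1
    · simp [h1, hG.zero_one]
    by_cases h2 : u = -1
    · simp [h2, hG.zero_neg_one]
    exact (hG.pos u h1 h2).le
  have hG'1 : deriv G 1 = 0 := by
    have : IsLocalMin G 1 := Filter.Eventually.of_forall (fun y => hG.zero_one ▸ hGnn y)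
    exact this.deriv_eq_zero
  -- second derivative identity
  have hi2 : ∀ x, deriv (deriv vinf) x = deriv G (vinf x) := by
    intro x
    rw [← heq x, iteratedDeriv_succ, iteratedDeriv_one]
  have hgem1 : ∀ x, -1 ≤ vinf x := by
    intro x
    refine le_of_tendsto hlim_bot ?_
    exact Filter.eventually_atBot.2 ⟨x, fun y hy => hmono.monotone hy⟩
  have hgt1 : ∀ x, -1 < vinf x :=
    fun x => lt_of_le_of_lt (hgem1 (x-1)) (hmono (by linarith : x - 1 < x))
  have hdvC : ContDiff ℝ 2 (deriv vinf) := by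
    have h3 : ContDiff ℝ ((2:WithTop ℕ∞)+1) vinf := hv
    exact (contDiff_succ_iff_deriv.mp h3).2.2
  have hdg : ∀ x, HasDerivAt (deriv vinf) (deriv G (vinf x)) x := by
    intro x
    have := (hdvC.differentiable (by norm_num) x).hasDerivAt
    rwa [hi2 x] at this
  have hGc : ∀ x, HasDerivAt (fun y => G (vinf y)) (deriv G (vinf x) * deriv vinf x) x := by
    intro x
    exact ((hG.smooth.differentiable (by norm_num) (vinf x)).hasDerivAt).comp x (hgd x)
  -- energy identity
  have hEd : ∀ x, HasDerivAt (fun y => (deriv vinf y)^2 - 2 * G (vinf y)) 0 x := by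
    intro x
    have h1 := ((hdg x).pow 2).sub ((hGc x).const_mul 2)
    exact h1.congr_deriv (by ring)
  obtain ⟨e, hEe⟩ : ∃ e : ℝ, ∀ x, (deriv vinf x)^2 = 2 * G (vinf x) + e := by
    refine ⟨(deriv vinf 0)^2 - 2 * G (vinf 0), fun x => ?_⟩
    have := const_of_hasDerivAt_zero hEd x 0
    linarith
  have hGv : Filter.Tendsto (fun x => G (vinf x)) Filter.atTop (nhds 0) := by
    have := (hG.smooth.continuous.tendsto 1).comp hlim_top
    rwa [hG.zero_one] at this
  have he : e = 0 := by
    rcases lt_trichotomy e 0 with hneg | h0 | hpos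
    · exfalso
      have hev : ∀ᶠ x in Filter.atTop, G (vinf x) < -e/2 :=
        hGv.eventually (eventually_of_mem (Iio_mem_nhds (by linarith)) (fun y hy => hy))
      rcases hev.exists with ⟨x, hx⟩
      nlinarith [hEe x, sq_nonneg (deriv vinf x)]
    · exact h0
    · exfalso
      have hge : ∀ x, Real.sqrt e ≤ deriv vinf x := by
        intro x
        have h2 : e ≤ (deriv vinf x)^2 := by nlinarith [hEe x, hGnn (vinf x)]
        calc Real.sqrt e ≤ Real.sqrt ((deriv vinf x)^2) := Real.sqrt_le_sqrt h2
        _ = deriv vinf x := by rw [Real.sqrt_sq (gnonneg x)]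
      have hmonw : Monotone (fun x => vinf x - Real.sqrt e * x) := by
        apply monotone_of_deriv_nonneg
        · exact hvd.sub (differentiable_id.const_mul _)
        · intro x
          have h3 : HasDerivAt (fun x => vinf x - Real.sqrt e * x)
              (deriv vinf x - Real.sqrt e) x := by
            exact ((hgd x).sub ((hasDerivAt_id x).const_mul (Real.sqrt e))).congr_deriv (by ring)
          rw [h3.deriv]
          linarith [hge x]
      have hse : 0 < Real.sqrt e := Real.sqrt_pos.2 hpos
      have hX0 : (0:ℝ) ≤ 2 / Real.sqrt e := by positivity
      have hm := hmonw hX0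
      simp only [hzero, mul_zero, sub_zero] at hm
      have h2 : Real.sqrt e * (2 / Real.sqrt e) = 2 := by field_simp
      have h4 := hlt1 (2 / Real.sqrt e)
      nlinarith
  have hsq : ∀ x, (deriv vinf x)^2 = 2 * G (vinf x) := by
    intro x; have := hEe x; rw [he] at this; linarith
  have gpos : ∀ x, 0 < deriv vinf x := by
    intro x
    rcases eq_or_lt_of_le (gnonneg x) with h | h
    · exfalso
      have hGpos : 0 < G (vinf x) :=
        hG.pos _ (ne_of_lt (hlt1 x)) (ne_of_gt (hgt1 x))
      nlinarith [hsq x]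
    · exact h
  have gsqrt : ∀ x, deriv vinf x = Real.sqrt (2 * G (vinf x)) := by
    intro x
    rw [← hsq x, Real.sqrt_sq (gnonneg x)]
  have gtends : Filter.Tendsto (deriv vinf) Filter.atTop (nhds 0) := by
    have h1 : Filter.Tendsto (fun x => Real.sqrt (2 * G (vinf x))) Filter.atTop (nhds 0) := by
      have h2 : Filter.Tendsto (fun x => 2 * G (vinf x)) Filter.atTop (nhds 0) := by
        simpa using hGv.const_mul 2
      have h3 := (Real.continuous_sqrt.tendsto 0).comp h2
      rw [Real.sqrt_zero] at h3
      exact h3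
    exact h1.congr (fun x => (gsqrt x).symm)
  have gptends : Filter.Tendsto (fun x => deriv G (vinf x)) Filter.atTop (nhds 0) := by
    have hGdc : Continuous (deriv G) := by
      have h2 : ContDiff ℝ ((1:WithTop ℕ∞)+1) G := hG.smooth
      exact ((contDiff_succ_iff_deriv.mp h2).2.2).continuous
    have := (hGdc.tendsto 1).comp hlim_top
    rwa [hG'1] at this
  exact ⟨gpos, gtends, gptends, hi2⟩

/-- kernel of the linearized dissipation operator on the half line:
any `f ∈ C³(ℝ₊) ∩ H¹(ℝ₊)` with `(−f_xx + G''(v_∞) f)_x = 0` on `(0, ∞)` is a multiple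
of `v_∞'`. -/
theorem kernel_linearized_dissipation_half_line (G : ℝ → ℝ) (hG : DoubleWell G)
    (hG3 : ContDiff ℝ 3 G)
    -- `vinf` is the standing-wave profile `v_∞`
    (vinf : ℝ → ℝ) (hv : ContDiff ℝ 3 vinf)
    (hodd : ∀ x : ℝ, vinf (-x) = - vinf x)
    (hmono : StrictMono vinf)
    (heq : ∀ x : ℝ, iteratedDeriv 2 vinf x = deriv G (vinf x))
    (hzero : vinf 0 = 0)
    (hlim_top : Filter.Tendsto vinf Filter.atTop (nhds 1))
    (hlim_bot : Filter.Tendsto vinf Filter.atBot (nhds (-1)))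
    -- `f ∈ C³(ℝ₊) ∩ H¹(ℝ₊)`
    (f : ℝ → ℝ)
    (hf : ContDiffOn ℝ 3 f (Set.Ici 0))
    (hfH1 : MeasureTheory.IntegrableOn (fun x => (f x)^2 + (deriv f x)^2) (Set.Ioi 0))
    -- `L f = (−f_xx + G''(v_∞) f)_x = 0` on `(0, ∞)`
    (hker : ∀ x ∈ Set.Ioi (0:ℝ),
      deriv (fun y => - iteratedDeriv 2 f y + iteratedDeriv 2 G (vinf y) * f y) x = 0) :
    ∃ α : ℝ, ∀ x ∈ Set.Ici (0:ℝ), f x = α * deriv vinf x := by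
  obtain ⟨gpos, gtends, gptends, hi2v⟩ :=
    vinf_props G hG vinf hv hmono heq hzero hlim_top hlim_bot
  -- regularity of f on the open half line
  have hfo : ContDiffOn ℝ 3 f (Set.Ioi 0) := hf.mono Set.Ioi_subset_Ici_self
  have hdf1 : ContDiffOn ℝ 2 (deriv f) (Set.Ioi 0) :=
    hfo.deriv_of_isOpen isOpen_Ioi (by norm_num)
  have hdf2 : ContDiffOn ℝ 1 (deriv (deriv f)) (Set.Ioi 0) :=
    hdf1.deriv_of_isOpen isOpen_Ioi (by norm_num)
  have hfd : ∀ x ∈ Set.Ioi (0:ℝ), HasDerivAt f (deriv f x) x := fun x hx =>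
    ((hfo.contDiffAt (isOpen_Ioi.mem_nhds hx)).differentiableAt (by norm_num)).hasDerivAt
  have hdfd : ∀ x ∈ Set.Ioi (0:ℝ), HasDerivAt (deriv f) (deriv (deriv f) x) x := fun x hx =>
    ((hdf1.contDiffAt (isOpen_Ioi.mem_nhds hx)).differentiableAt (by norm_num)).hasDerivAt
  have hddfd : ∀ x ∈ Set.Ioi (0:ℝ), DifferentiableAt ℝ (deriv (deriv f)) x := fun x hx =>
    (hdf2.contDiffAt (isOpen_Ioi.mem_nhds hx)).differentiableAt (by norm_num)
  -- iterated derivatives as repeated derivs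
  have hi2f : iteratedDeriv 2 f = deriv (deriv f) := by
    rw [iteratedDeriv_succ, iteratedDeriv_one]
  have hi2G : iteratedDeriv 2 G = deriv (deriv G) := by
    rw [iteratedDeriv_succ, iteratedDeriv_one]
  -- regularity of G'' and of q = G''(v)
  have hGdC2 : ContDiff ℝ 2 (deriv G) := by
    have h3 : ContDiff ℝ ((2:WithTop ℕ∞)+1) G := hG3
    exact (contDiff_succ_iff_deriv.mp h3).2.2
  have hGd2C : ContDiff ℝ 1 (deriv (deriv G)) := by
    have h2 : ContDiff ℝ ((1:WithTop ℕ∞)+1) (deriv G) := hGdC2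
    exact (contDiff_succ_iff_deriv.mp h2).2.2
  have hvd : Differentiable ℝ vinf := hv.differentiable (by norm_num)
  have hq_diff : Differentiable ℝ (fun x => iteratedDeriv 2 G (vinf x)) := by
    rw [hi2G]
    exact (hGd2C.differentiable (by norm_num)).comp hvd
  have hqt : Filter.Tendsto (fun x => iteratedDeriv 2 G (vinf x)) Filter.atTop
      (nhds (iteratedDeriv 2 G 1)) := by
    rw [hi2G]
    exact (hGd2C.continuous.tendsto 1).comp hlim_top
  -- derivative structure of deriv vinf
  have hdvC : ContDiff ℝ 2 (deriv vinf) := by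
    have h3 : ContDiff ℝ ((2:WithTop ℕ∞)+1) vinf := hv
    exact (contDiff_succ_iff_deriv.mp h3).2.2
  have hdgv : ∀ x, HasDerivAt (deriv vinf) (deriv G (vinf x)) x := by
    intro x
    have := (hdvC.differentiable (by norm_num) x).hasDerivAt
    rwa [hi2v x] at this
  have hgpd : ∀ x : ℝ, HasDerivAt (fun y => deriv G (vinf y))
      (iteratedDeriv 2 G (vinf x) * deriv vinf x) x := by
    intro x
    have h1 : HasDerivAt (deriv G) (deriv (deriv G) (vinf x)) (vinf x) :=
      (hGdC2.differentiable (by norm_num) (vinf x)).hasDerivAt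
    have := h1.comp x (hvd x).hasDerivAt
    rw [hi2G]
    exact this
  -- the conserved quantity h is constant on (0, ∞)
  have hhd : ∀ x ∈ Set.Ioi (0:ℝ), HasDerivAt
      (fun y => - iteratedDeriv 2 f y + iteratedDeriv 2 G (vinf y) * f y) 0 x := by
    intro x hx
    have hdiff : DifferentiableAt ℝ
        (fun y => - iteratedDeriv 2 f y + iteratedDeriv 2 G (vinf y) * f y) x := by
      rw [hi2f]
      exact ((hddfd x hx).neg).add ((hq_diff x).mul (hfd x hx).differentiableAt)
    have := hdiff.hasDerivAt
    rwa [hker x hx] at this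
  set c : ℝ := - iteratedDeriv 2 f 1 + iteratedDeriv 2 G (vinf 1) * f 1 with hc_def
  have hconst : ∀ x ∈ Set.Ioi (0:ℝ),
      - iteratedDeriv 2 f x + iteratedDeriv 2 G (vinf x) * f x = c :=
    fun x hx => const_on_Ioi hhd x hx
  have hddf_eq : ∀ x ∈ Set.Ioi (0:ℝ),
      deriv (deriv f) x = iteratedDeriv 2 G (vinf x) * f x - c := by
    intro x hx
    have := hconst x hx
    rw [hi2f] at this
    linarith
  -- integrability of f² and (f')²
  have hfcont : ContinuousOn f (Set.Ioi 0) := hfo.continuousOn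
  have hdfcont : ContinuousOn (deriv f) (Set.Ioi 0) := hdf1.continuousOn
  have hddfcont : ContinuousOn (deriv (deriv f)) (Set.Ioi 0) := hdf2.continuousOn
  have hf2int : MeasureTheory.IntegrableOn (fun x => (f x)^2) (Set.Ioi 0) := by
    refine hfH1.mono' ?_ ?_
    · exact ((hfcont.pow 2).aestronglyMeasurable measurableSet_Ioi)
    · filter_upwards [MeasureTheory.ae_restrict_mem measurableSet_Ioi] with x hx
      rw [Real.norm_eq_abs, abs_of_nonneg (sq_nonneg _)]
      nlinarith [sq_nonneg (deriv f x)]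
  have hdf2int : MeasureTheory.IntegrableOn (fun x => (deriv f x)^2) (Set.Ioi 0) := by
    refine hfH1.mono' ?_ ?_
    · exact ((hdfcont.pow 2).aestronglyMeasurable measurableSet_Ioi)
    · filter_upwards [MeasureTheory.ae_restrict_mem measurableSet_Ioi] with x hx
      rw [Real.norm_eq_abs, abs_of_nonneg (sq_nonneg _)]
      nlinarith [sq_nonneg (f x)]
  -- f tends to 0 at infinity
  have hIoisub : ∀ {s t : ℝ}, 1 ≤ s → s ≤ t → Set.uIcc s t ⊆ Set.Ioi (0:ℝ) := by
    intro s t hs hst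
    refine Set.ordConnected_Ioi.uIcc_subset ?_ ?_ <;> simp [Set.mem_Ioi] <;> linarith
  have hF'int : MeasureTheory.IntegrableOn (fun x => 2 * f x * deriv f x) (Set.Ioi 1) := by
    refine (hfH1.mono_set (Set.Ioi_subset_Ioi zero_le_one)).mono' ?_ ?_
    · exact ((((continuousOn_const (c:=(2:ℝ))).mul hfcont).mul hdfcont).mono (Set.Ioi_subset_Ioi zero_le_one)).aestronglyMeasurable measurableSet_Ioi
    · filter_upwards [MeasureTheory.ae_restrict_mem measurableSet_Ioi] with x hx
      rw [Real.norm_eq_abs, abs_mul, abs_mul, abs_two]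
      nlinarith [sq_nonneg (|f x| - |deriv f x|), sq_abs (f x), sq_abs (deriv f x),
        abs_nonneg (f x), abs_nonneg (deriv f x)]
  have hFTC : ∀ b ≥ (1:ℝ), (f b)^2 - (f 1)^2 = ∫ t in (1:ℝ)..b, 2 * f t * deriv f t := by
    intro b hb
    refine (intervalIntegral.integral_eq_sub_of_hasDerivAt (f := fun y => (f y)^2)
      (f' := fun t => 2 * f t * deriv f t) (a := 1) (b := b) ?_ ?_).symm
    · intro t ht
      have ht' : t ∈ Set.Ioi (0:ℝ) := hIoisub le_rfl hb ht
      exact ((hfd t ht').pow 2).congr_deriv (by ring)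
    · exact ((((continuousOn_const (c:=(2:ℝ))).mul hfcont).mul hdfcont).mono (hIoisub le_rfl hb)).intervalIntegrable
  have hFt : Filter.Tendsto (fun b => (f b)^2) Filter.atTop
      (nhds ((f 1)^2 + ∫ t in Set.Ioi 1, 2 * f t * deriv f t)) := by
    have h1 := MeasureTheory.intervalIntegral_tendsto_integral_Ioi 1 hF'int tendsto_id
    have h2 := h1.const_add ((f 1)^2)
    refine h2.congr' ?_
    filter_upwards [Filter.eventually_ge_atTop (1:ℝ)] with b hb
    have := hFTC b hb
    simp only [id]
    linarith
  have hL0 : (f 1)^2 + (∫ t in Set.Ioi 1, 2 * f t * deriv f t) = 0 :=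
    limit_zero_of_integrableOn hf2int hFt
  have hf0 : Filter.Tendsto f Filter.atTop (nhds 0) := by
    have hb : ∀ x, ‖f x‖ ≤ Real.sqrt ((f x)^2) := fun x => by
      rw [Real.norm_eq_abs, Real.sqrt_sq_eq_abs]
    have ht : Filter.Tendsto (fun x => Real.sqrt ((f x)^2)) Filter.atTop (nhds 0) := by
      have := (Real.continuous_sqrt.tendsto 0).comp (hL0 ▸ hFt)
      rw [Real.sqrt_zero] at this
      exact this
    exact squeeze_zero_norm hb ht
  -- a sequence along which deriv f tends to 0
  have hseq : ∀ n : ℕ, ∃ x : ℝ, (n:ℝ) + 1 < x ∧ (deriv f x)^2 < 1/((n:ℝ)+1) := by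
    intro n
    by_contra hcon
    push_neg at hcon
    refine false_of_le_integrableOn (h := fun x => (deriv f x)^2) (a := (n:ℝ)+1)
      (ε := 1/((n:ℝ)+1)) (by positivity) ?_ ?_
    · exact hdf2int.mono_set (Set.Ioi_subset_Ioi (by positivity))
    · exact fun x hx => hcon x hx
  choose u hu1 hu2 using hseq
  have huT : Filter.Tendsto u Filter.atTop Filter.atTop := by
    refine tendsto_atTop_mono (fun n => (hu1 n).le) ?_
    exact Filter.tendsto_atTop_add_const_right _ 1 tendsto_natCast_atTop_atTop
  have hupos : ∀ n, u n ∈ Set.Ioi (0:ℝ) := fun n => by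
    have := hu1 n
    have : (0:ℝ) ≤ (n:ℝ) := Nat.cast_nonneg n
    simp only [Set.mem_Ioi]
    linarith [hu1 n]
  have hu0 : Filter.Tendsto (fun n => deriv f (u n)) Filter.atTop (nhds 0) := by
    have hb : ∀ n : ℕ, ‖deriv f (u n)‖ ≤ Real.sqrt (1/((n:ℝ)+1)) := fun n => by
      rw [Real.norm_eq_abs, ← Real.sqrt_sq_eq_abs]
      exact Real.sqrt_le_sqrt (hu2 n).le
    have ht : Filter.Tendsto (fun n : ℕ => Real.sqrt (1/((n:ℝ)+1))) Filter.atTop (nhds 0) := by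
      have h1 : Filter.Tendsto (fun n : ℕ => 1/((n:ℝ)+1)) Filter.atTop (nhds 0) :=
        tendsto_one_div_add_atTop_nhds_zero_nat
      have := (Real.continuous_sqrt.tendsto 0).comp h1
      rw [Real.sqrt_zero] at this
      exact this
    exact squeeze_zero_norm hb ht
  -- deriv deriv f tends to -c
  have hddft : Filter.Tendsto (fun x => deriv (deriv f) x) Filter.atTop (nhds (-c)) := by
    have h1 : Filter.Tendsto (fun x => iteratedDeriv 2 G (vinf x) * f x - c) Filter.atTop
        (nhds (-c)) := by
      have h2 := hqt.mul hf0
      rw [mul_zero] at h2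
      have := h2.sub_const c
      simpa using this
    refine h1.congr' ?_
    filter_upwards [Filter.eventually_gt_atTop (0:ℝ)] with x hx
    exact (hddf_eq x hx).symm
  -- c = 0
  have hc0 : c = 0 := by
    by_contra hc
    have hcpos : 0 < |c|/2 := by positivity
    have hev : ∀ᶠ x in Filter.atTop, |deriv (deriv f) x + c| ≤ |c|/2 := by
      have := hddft.eventually (Metric.closedBall_mem_nhds (-c) hcpos)
      filter_upwards [this] with x hx
      simp only [Metric.mem_closedBall, Real.dist_eq] at hx
      convert hx using 2
      ring
    obtain ⟨a0, ha0⟩ := Filter.eventually_atTop.1 hev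
    set a := max a0 1 with ha_def
    have ha1 : (1:ℝ) ≤ a := le_max_right _ _
    have ha : ∀ x ≥ a, |deriv (deriv f) x + c| ≤ |c|/2 :=
      fun x hx => ha0 x (le_trans (le_max_left _ _) hx)
    -- pick s along the sequence beyond a
    obtain ⟨n₀, hn₀⟩ := (huT.eventually (Filter.eventually_ge_atTop a)).exists
    set s := u n₀ with hs_def
    have hs1 : (1:ℝ) ≤ s := le_trans ha1 hn₀
    -- pick t along the sequence, far away and with small deriv f
    have hbig : ∀ᶠ m in Filter.atTop,
        u m ≥ s + (2/|c|) * (|deriv f s| + 2) ∧ |deriv f (u m)| ≤ 1 := by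
      have h1 := huT.eventually (Filter.eventually_ge_atTop (s + (2/|c|) * (|deriv f s| + 2)))
      have h2 : ∀ᶠ m in Filter.atTop, |deriv f (u m)| ≤ 1 := by
        have := hu0.eventually (Metric.closedBall_mem_nhds 0 one_pos)
        filter_upwards [this] with m hm
        simp only [Metric.mem_closedBall, Real.dist_eq, sub_zero] at hm
        exact hm
      exact h1.and h2
    obtain ⟨m, hm1, hm2⟩ := hbig.exists
    set t := u m with ht_def
    have hst : s ≤ t := by
      have h3 : 0 ≤ (2/|c|) * (|deriv f s| + 2) := by positivity
      linarith
    have hsub : Set.uIcc s t ⊆ Set.Ioi (0:ℝ) := hIoisub hs1 hst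
    -- FTC for deriv f
    have hFTC2 : deriv f t - deriv f s = ∫ x in s..t, deriv (deriv f) x :=
      (intervalIntegral.integral_eq_sub_of_hasDerivAt
        (fun x hx => hdfd x (hsub hx))
        ((hddfcont.mono hsub).intervalIntegrable)).symm
    have hsplit : (∫ x in s..t, deriv (deriv f) x)
        = (∫ x in s..t, (deriv (deriv f) x + c)) - c * (t - s) := by
      rw [intervalIntegral.integral_add ((hddfcont.mono hsub).intervalIntegrable)
        intervalIntegrable_const]
      simp
      ring
    have hbound : |∫ x in s..t, (deriv (deriv f) x + c)| ≤ (|c|/2) * |t - s| := by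
      have hbc : ∀ x ∈ Set.uIoc s t, ‖deriv (deriv f) x + c‖ ≤ |c|/2 := by
        intro x hx
        have hx' : x ∈ Set.uIcc s t := Set.uIoc_subset_uIcc hx
        have hxs : s ≤ x := by
          rw [Set.uIcc_of_le hst] at hx'
          exact hx'.1
        rw [Real.norm_eq_abs]
        exact ha x (le_trans hn₀ hxs)
      have := intervalIntegral.norm_integral_le_of_norm_le_const (C := |c|/2) hbc
      simpa [Real.norm_eq_abs] using this
    have hts : t - s ≥ (2/|c|) * (|deriv f s| + 2) := by linarith
    have hcabs : 0 < |c| := abs_pos.2 hc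
    have hts0 : 0 ≤ t - s := by linarith
    have key : |c| * (t - s) ≤ (|c|/2) * (t - s) + |deriv f t| + |deriv f s| := by
      have h5 : c * (t - s) = (∫ x in s..t, (deriv (deriv f) x + c))
          - (deriv f t - deriv f s) := by
        rw [hFTC2]
        linarith [hsplit]
      calc |c| * (t - s) = |c * (t - s)| := by
            rw [abs_mul, abs_of_nonneg hts0]
      _ ≤ |∫ x in s..t, (deriv (deriv f) x + c)| + |deriv f t - deriv f s| := by
            rw [h5]; exact abs_sub _ _
      _ ≤ (|c|/2) * |t - s| + (|deriv f t| + |deriv f s|) := by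
            gcongr
            exact abs_sub _ _
      _ = (|c|/2) * (t - s) + |deriv f t| + |deriv f s| := by
            rw [abs_of_nonneg hts0]; ring
    have h6 : (|c|/2) * (t - s) ≥ |deriv f s| + 2 := by
      have := mul_le_mul_of_nonneg_left hts (le_of_lt (half_pos hcabs))
      calc (|c|/2) * (t - s) ≥ (|c|/2) * ((2/|c|) * (|deriv f s| + 2)) := by
            exact mul_le_mul_of_nonneg_left hts (by positivity)
      _ = |deriv f s| + 2 := by field_simp
    nlinarith [abs_nonneg (deriv f s), abs_nonneg (deriv f t)]
  -- Wronskian is constant, equal to 0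
  have hWd : ∀ x ∈ Set.Ioi (0:ℝ), HasDerivAt
      (fun y => f y * deriv G (vinf y) - deriv f y * deriv vinf y) 0 x := by
    intro x hx
    have h1 : HasDerivAt (fun y => f y * deriv G (vinf y))
        (deriv f x * deriv G (vinf x) + f x * (iteratedDeriv 2 G (vinf x) * deriv vinf x)) x :=
      (hfd x hx).mul (hgpd x)
    have h2 : HasDerivAt (fun y => deriv f y * deriv vinf y)
        (deriv (deriv f) x * deriv vinf x + deriv f x * deriv G (vinf x)) x :=
      (hdfd x hx).mul (hdgv x)
    have h3 := h1.sub h2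
    have h4 := hddf_eq x hx
    rw [hc0, sub_zero] at h4
    exact h3.congr_deriv (by rw [h4]; ring)
  have hWc : ∀ x ∈ Set.Ioi (0:ℝ),
      f x * deriv G (vinf x) - deriv f x * deriv vinf x
        = f 1 * deriv G (vinf 1) - deriv f 1 * deriv vinf 1 :=
    fun x hx => const_on_Ioi hWd x hx
  have hW1 : f 1 * deriv G (vinf 1) - deriv f 1 * deriv vinf 1 = 0 := by
    have hWt : Filter.Tendsto
        (fun n => f (u n) * deriv G (vinf (u n)) - deriv f (u n) * deriv vinf (u n))
        Filter.atTop (nhds 0) := by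
      have h1 := ((hf0.comp huT).mul (gptends.comp huT)).sub (hu0.mul (gtends.comp huT))
      simpa using h1
    have hWt2 : Filter.Tendsto
        (fun _ : ℕ => f 1 * deriv G (vinf 1) - deriv f 1 * deriv vinf 1)
        Filter.atTop (nhds 0) := by
      refine hWt.congr ?_
      intro n
      exact hWc (u n) (hupos n)
    exact tendsto_nhds_unique tendsto_const_nhds hWt2
  have hW0 : ∀ x ∈ Set.Ioi (0:ℝ),
      f x * deriv G (vinf x) - deriv f x * deriv vinf x = 0 :=
    fun x hx => (hWc x hx).trans hW1
  -- the ratio f / v' is constant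
  set α : ℝ := f 1 / deriv vinf 1 with hα
  have hRd : ∀ x ∈ Set.Ioi (0:ℝ), HasDerivAt (fun y => f y / deriv vinf y) 0 x := by
    intro x hx
    have h1 := (hfd x hx).div (hdgv x) (ne_of_gt (gpos x))
    have h2 : deriv f x * deriv vinf x - f x * deriv G (vinf x) = 0 := by
      have := hW0 x hx
      linarith
    rw [h2] at h1
    exact h1.congr_deriv (by simp)
  have hfinal : ∀ x ∈ Set.Ioi (0:ℝ), f x = α * deriv vinf x := by
    intro x hx
    have h1 : f x / deriv vinf x = α := const_on_Ioi hRd x hx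
    have h2 := gpos x
    field_simp [ne_of_gt h2] at h1
    linarith [h1]
  refine ⟨α, ?_⟩
  intro x hx
  rcases (Set.mem_Ici.1 hx).lt_or_eq with hlt | heq0
  · exact hfinal x hlt
  · subst heq0
    -- continuity argument at 0
    have hfc : Filter.Tendsto f (nhdsWithin 0 (Set.Ioi 0)) (nhds (f 0)) := by
      have h1 : ContinuousWithinAt f (Set.Ici 0) 0 :=
        hf.continuousOn 0 Set.self_mem_Ici
      exact h1.tendsto.mono_left (nhdsWithin_mono 0 Set.Ioi_subset_Ici_self)
    have hgc : Filter.Tendsto (fun y => α * deriv vinf y) (nhdsWithin 0 (Set.Ioi 0))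
        (nhds (α * deriv vinf 0)) :=
      ((continuous_const.mul hdvC.continuous).tendsto 0).mono_left nhdsWithin_le_nhds
    have hev : f =ᶠ[nhdsWithin 0 (Set.Ioi 0)] fun y => α * deriv vinf y := by
      filter_upwards [self_mem_nhdsWithin] with y hy
      exact hfinal y hy
    have := hfc.congr' hev
    exact tendsto_nhds_unique this hgc

end KernelHelpers
end
end
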